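/- arXiv:2105.02361 — 5 statements merged into one kernel-verified Lean document; each statement's English description precedes it below -/
import Mathlib

section
/- Let T be a finite tree (a connected acyclic simple graph on a nonempty finite vertex set). Then the number of odd subtrees of T minus the number of even subtrees of T equals the independence number of T; that is, (# of nonempty vertex subsets S with T[S] connected and |S| odd) − (# of nonempty vertex subsets S with T[S] connected and |S| even) = α(T). -/
open SimpleGraph Filter

/-- A subgraph is a cycle: nonempty vertex set, connected, and every vertex of the
subgraph has degree exactly 2 in the subgraph. -/
def SimpleGraph.Subgraph.IsCycleSub {V : Type*} {G : SimpleGraph V} (H : G.Subgraph) : Prop :=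
  H.verts.Nonempty ∧ H.coe.Connected ∧ ∀ v ∈ H.verts, (H.neighborSet v).ncard = 2

/-- The number of odd cycles of `G`. -/
noncomputable def cOdd {V : Type*} (G : SimpleGraph V) : ℕ :=
  {H : G.Subgraph | H.IsCycleSub ∧ Odd H.verts.ncard}.ncard

/-- The number of even cycles of `G`. -/
noncomputable def cEven {V : Type*} (G : SimpleGraph V) : ℕ :=
  {H : G.Subgraph | H.IsCycleSub ∧ Even H.verts.ncard}.ncard

/-- The number of odd cycles of `G` passing through the edge `xy`. -/
noncomputable def cOddE {V : Type*} (G : SimpleGraph V) (x y : V) : ℕ :=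
  {H : G.Subgraph | H.IsCycleSub ∧ Odd H.verts.ncard ∧ H.Adj x y}.ncard

/-- The number of even cycles of `G` passing through the edge `xy`. -/
noncomputable def cEvenE {V : Type*} (G : SimpleGraph V) (x y : V) : ℕ :=
  {H : G.Subgraph | H.IsCycleSub ∧ Even H.verts.ncard ∧ H.Adj x y}.ncard

section JamisonInternal

variable {V : Type*} {G : SimpleGraph V}

/-- Reachability within a vertex set `S`. -/
def ReachIn (G : SimpleGraph V) (S : Finset V) (x y : V) : Prop :=
  ∃ p : G.Walk x y, ∀ z ∈ p.support, z ∈ S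

lemma ReachIn.refl {S : Finset V} {x : V} (hx : x ∈ S) : ReachIn G S x x :=
  ⟨Walk.nil, by simp [hx]⟩

lemma ReachIn.symm {S : Finset V} {x y : V} (h : ReachIn G S x y) : ReachIn G S y x := by
  obtain ⟨p, hp⟩ := h
  exact ⟨p.reverse, by simpa using hp⟩

lemma ReachIn.trans {S : Finset V} {x y z : V} (h : ReachIn G S x y) (h' : ReachIn G S y z) :
    ReachIn G S x z := by
  obtain ⟨p, hp⟩ := h
  obtain ⟨q, hq⟩ := h'
  refine ⟨p.append q, fun w hw => ?_⟩
  rw [Walk.support_append] at hw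
  rcases List.mem_append.1 hw with h | h
  · exact hp _ h
  · exact hq _ (List.mem_of_mem_tail h)

lemma ReachIn.mono {S T : Finset V} (hST : S ⊆ T) {x y : V} (h : ReachIn G S x y) :
    ReachIn G T x y := by
  obtain ⟨p, hp⟩ := h
  exact ⟨p, fun z hz => hST (hp z hz)⟩

lemma ReachIn.mem_left {S : Finset V} {x y : V} (h : ReachIn G S x y) : x ∈ S := by
  obtain ⟨p, hp⟩ := h; exact hp _ p.start_mem_support

lemma ReachIn.mem_right {S : Finset V} {x y : V} (h : ReachIn G S x y) : y ∈ S := by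
  obtain ⟨p, hp⟩ := h; exact hp _ p.end_mem_support

lemma reachIn_of_adj {S : Finset V} {x y : V} (h : G.Adj x y) (hx : x ∈ S) (hy : y ∈ S) :
    ReachIn G S x y :=
  ⟨Walk.cons h Walk.nil, by simp [hx, hy]⟩

/-- Connectivity of the induced subgraph on `S`, expressed without subtypes. -/
def ConnIn (G : SimpleGraph V) (S : Finset V) : Prop :=
  ∀ x ∈ S, ∀ y ∈ S, ReachIn G S x y

lemma connIn_singleton (v : V) : ConnIn G {v} := by
  intro x hx y hy
  simp only [Finset.mem_singleton] at hx hy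
  subst hx; subst hy
  exact ReachIn.refl (by simp)

/-- Transfer a walk with support in `S` to reachability in the induced graph. -/
lemma induce_reachable_of_reachIn {S : Finset V} {x y : V} (h : ReachIn G S x y)
    (hx : x ∈ S) (hy : y ∈ S) :
    (G.induce (S : Set V)).Reachable ⟨x, by simpa using hx⟩ ⟨y, by simpa using hy⟩ := by
  obtain ⟨p, hp⟩ := h
  induction p with
  | nil => exact Reachable.refl _
  | @cons a b c hab q ih =>
    have hb : b ∈ S := hp b (by simp)
    have h1 : (G.induce (S : Set V)).Adj ⟨a, by simpa using hx⟩ ⟨b, by simpa using hb⟩ := by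
      simpa using hab
    exact h1.reachable.trans (ih hb hy (fun z hz => hp z (by simp [hz])))

lemma reachIn_of_induce_walk {S : Finset V} :
    ∀ {a b : (S : Set V)}, (G.induce (S : Set V)).Walk a b → ReachIn G S a.1 b.1 := by
  intro a b p
  induction p with
  | nil => exact ReachIn.refl (by simpa using a.2)
  | @cons a b c hab q ih =>
    have h1 : G.Adj a.1 b.1 := by simpa using hab
    exact (reachIn_of_adj h1 (by simpa using a.2) (by simpa using b.2)).trans ih

lemma connIn_iff_induce_connected {S : Finset V} (hS : S.Nonempty) :
    ConnIn G S ↔ (G.induce (S : Set V)).Connected := by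
  constructor
  · intro h
    obtain ⟨v, hv⟩ := hS
    haveI : Nonempty (S : Set V) := ⟨⟨v, by simpa using hv⟩⟩
    refine ⟨fun a b => ?_⟩
    exact induce_reachable_of_reachIn (h a.1 (by simpa using a.2) b.1 (by simpa using b.2))
        (by simpa using a.2) (by simpa using b.2)
  · intro h x hx y hy
    obtain ⟨p⟩ := h.preconnected ⟨x, by simpa using hx⟩ ⟨y, by simpa using hy⟩
    exact reachIn_of_induce_walk p
variable [DecidableEq V]
lemma connIn_insert {S : Finset V} {u v : V} (hS : ConnIn G S) (hu : u ∈ S)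
    (hadj : G.Adj v u) : ConnIn G (insert v S) := by
  have key : ∀ x ∈ S, ReachIn G (insert v S) v x := fun x hx =>
    (reachIn_of_adj hadj (by simp) (by simp [hu])).trans
      ((hS u hu x hx).mono (Finset.subset_insert _ _))
  have key2 : ∀ x ∈ insert v S, ReachIn G (insert v S) v x := by
    intro x hx
    rcases Finset.mem_insert.1 hx with rfl | hx
    · exact ReachIn.refl (by simp)
    · exact key x hx
  intro x hx y hy
  exact (key2 x hx).symm.trans (key2 y hy)

lemma reach_avoid {S : Finset V} {v u : V} (hpend : ∀ z ∈ S, G.Adj v z → z = u) :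
    ∀ (n : ℕ) {x y : V} (p : G.Walk x y), p.length ≤ n → (∀ z ∈ p.support, z ∈ S) →
      x ≠ v → y ≠ v → ∃ q : G.Walk x y, (∀ z ∈ q.support, z ∈ S) ∧ v ∉ q.support := by
  intro n
  induction n with
  | zero =>
    intro x y p hl hs hx _
    cases p with
    | nil => exact ⟨.nil, hs, by simp [Ne.symm hx]⟩
    | cons h q => simp at hl
  | succ n ih =>
    intro x y p hl hs hx hy
    cases p with
    | nil => exact ⟨.nil, hs, by simp [Ne.symm hx]⟩
    | @cons _ b _ h q =>
      by_cases hb : b = v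
      · subst hb
        have hxu : x = u := hpend x (hs x (by simp)) h.symm
        cases q with
        | nil => exact absurd rfl hy
        | @cons _ c _ h2 q2 =>
          have hcu : c = u := hpend c (hs c (by simp)) h2
          have hq2 : (q2.copy (hcu.trans hxu.symm) rfl).length ≤ n := by
            simp only [Walk.length_copy]
            simp only [Walk.length_cons] at hl
            omega
          refine ih (q2.copy (hcu.trans hxu.symm) rfl) hq2 ?_ hx hy
          intro z hz
          rw [Walk.support_copy] at hz
          exact hs z (by simp [hz])
      · obtain ⟨q', hq', hvq'⟩ := ih q (by
            simp only [Walk.length_cons] at hl; omega)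
          (fun z hz => hs z (by simp [hz])) hb hy
        refine ⟨.cons h q', fun z hz => ?_, ?_⟩
        · rw [Walk.support_cons] at hz
          rcases List.mem_cons.1 hz with rfl | hz
          · exact hs z (by simp)
          · exact hq' z hz
        · rw [Walk.support_cons]
          simp [hvq', Ne.symm hx]

lemma reachIn_erase {S : Finset V} {v u x y : V} (hpend : ∀ z ∈ S, G.Adj v z → z = u)
    (hx : x ≠ v) (hy : y ≠ v) (h : ReachIn G S x y) : ReachIn G (S.erase v) x y := by
  obtain ⟨p, hp⟩ := h
  obtain ⟨q, hq, hvq⟩ := reach_avoid hpend p.length p le_rfl hp hx hy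
  exact ⟨q, fun z hz => Finset.mem_erase.2 ⟨fun hzv => hvq (hzv ▸ hz), hq z hz⟩⟩

lemma connIn_erase_pendant {S : Finset V} {v u : V} (hS : ConnIn G S)
    (hpend : ∀ z ∈ S, G.Adj v z → z = u) : ConnIn G (S.erase v) := by
  intro x hx y hy
  rw [Finset.mem_erase] at hx hy
  exact reachIn_erase hpend hx.1 hy.1 (hS x hx.2 y hy.2)

/-- In a connected set containing the pendant vertex `v` and some other vertex,
the unique neighbor `u` of `v` belongs to the set. -/
lemma pendant_neighbor_mem {S : Finset V} {v u x : V} (hS : ConnIn G S)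
    (hv : v ∈ S) (hx : x ∈ S) (hxv : x ≠ v)
    (hpend : ∀ z ∈ S, G.Adj v z → z = u) : u ∈ S := by
  obtain ⟨p, hp⟩ := hS v hv x hx
  cases p with
  | nil => exact absurd rfl hxv
  | @cons _ b _ h q =>
    have hb : b ∈ S := hp b (by simp)
    exact (hpend b hb h) ▸ hb
/-- Independent set predicate. -/
def IndepIn (G : SimpleGraph V) (s : Finset V) : Prop :=
  ∀ x ∈ s, ∀ y ∈ s, x ≠ y → ¬ G.Adj x y

/-- Independence number of the induced subgraph on `W`. -/
noncomputable def alph (G : SimpleGraph V) (W : Finset V) : ℕ :=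
  sSup {n | ∃ s : Finset V, s ⊆ W ∧ IndepIn G s ∧ s.card = n}

lemma IndepIn.mono {s t : Finset V} (hst : s ⊆ t) (h : IndepIn G t) : IndepIn G s :=
  fun x hx y hy => h x (hst hx) y (hst hy)

/-- Inserting the pendant vertex `v` into an independent set avoiding `u` keeps independence. -/
lemma indep_insert_pendant {W s : Finset V} {v u : V}
    (hpend : ∀ y ∈ W, G.Adj v y → y = u) (hsW : s ⊆ W) (hind : IndepIn G s)
    (hus : u ∉ s) : IndepIn G (insert v s) := by
  have hv_nadj : ∀ y ∈ s, ¬ G.Adj v y := by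
    intro y hy hadj
    exact hus ((hpend y (hsW hy) hadj) ▸ hy)
  intro x hx y hy hxy
  by_cases hxv : x = v
  · subst hxv
    by_cases hyv : y = x
    · exact absurd hyv.symm hxy
    · exact hv_nadj y (Finset.mem_of_mem_insert_of_ne hy hyv)
  · by_cases hyv : y = v
    · subst hyv
      intro hadj
      exact hv_nadj x (Finset.mem_of_mem_insert_of_ne hx hxv) hadj.symm
    · exact hind x (Finset.mem_of_mem_insert_of_ne hx hxv)
        y (Finset.mem_of_mem_insert_of_ne hy hyv) hxy

lemma alph_set_nonempty (G : SimpleGraph V) (W : Finset V) :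
    {n | ∃ s : Finset V, s ⊆ W ∧ IndepIn G s ∧ s.card = n}.Nonempty :=
  ⟨0, ∅, by simp [IndepIn]⟩

lemma alph_set_bddAbove (G : SimpleGraph V) (W : Finset V) :
    BddAbove {n | ∃ s : Finset V, s ⊆ W ∧ IndepIn G s ∧ s.card = n} := by
  refine ⟨W.card, fun n hn => ?_⟩
  obtain ⟨s, hs, _, rfl⟩ := hn
  exact Finset.card_le_card hs

lemma card_le_alph {s W : Finset V} (hs : s ⊆ W) (hind : IndepIn G s) :
    s.card ≤ alph G W :=
  le_csSup (alph_set_bddAbove G W) ⟨s, hs, hind, rfl⟩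

lemma exists_alph (G : SimpleGraph V) (W : Finset V) :
    ∃ s : Finset V, s ⊆ W ∧ IndepIn G s ∧ s.card = alph G W :=
  Nat.sSup_mem (alph_set_nonempty G W) (alph_set_bddAbove G W)

lemma alph_mono {W W' : Finset V} (h : W ⊆ W') : alph G W ≤ alph G W' := by
  obtain ⟨s, hs, hind, hcard⟩ := exists_alph G W
  exact hcard ▸ card_le_alph (hs.trans h) hind

lemma alph_empty : alph G (∅ : Finset V) = 0 := by
  obtain ⟨s, hs, _, hcard⟩ := exists_alph G ∅
  rw [← hcard, Finset.subset_empty.1 hs, Finset.card_empty]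

lemma alph_singleton (v : V) : alph G ({v} : Finset V) = 1 := by
  refine le_antisymm ?_ ?_
  · obtain ⟨s, hs, _, hcard⟩ := exists_alph G {v}
    rw [← hcard]
    exact (Finset.card_le_card hs).trans (by simp)
  · exact (by simp : ({v} : Finset V).card = 1) ▸
      card_le_alph (le_refl _) (fun x hx y hy hxy => by
        simp only [Finset.mem_singleton] at hx hy; exact absurd (hx.trans hy.symm) hxy)

/-- If `u` has a pendant neighbor `v` in `W`, then removing `u` doesn't change `α`. -/
lemma alph_erase_of_pendant {W : Finset V} {v u : V} (hv : v ∈ W)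
    (hadj : G.Adj v u) (hpend : ∀ y ∈ W, G.Adj v y → y = u) :
    alph G (W.erase u) = alph G W := by
  refine le_antisymm (alph_mono (Finset.erase_subset _ _)) ?_
  obtain ⟨s, hs, hind, hcard⟩ := exists_alph G W
  by_cases hu : u ∈ s
  · have hvu : v ≠ u := hadj.ne
    have hvs : v ∉ s := fun hvs => hind v hvs u hu hvu hadj
    have hind' : IndepIn G (insert v (s.erase u)) :=
      indep_insert_pendant hpend ((Finset.erase_subset _ _).trans hs)
        (hind.mono (Finset.erase_subset _ _)) (Finset.notMem_erase _ _)
    have hsub : insert v (s.erase u) ⊆ W.erase u := by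
      intro x hx
      by_cases hxv : x = v
      · exact hxv ▸ Finset.mem_erase.2 ⟨hvu, hv⟩
      · have hx' := Finset.mem_of_mem_insert_of_ne hx hxv
        exact Finset.mem_erase.2 ⟨(Finset.mem_erase.1 hx').1, hs (Finset.mem_of_mem_erase hx')⟩
    have hcard' : (insert v (s.erase u)).card = s.card := by
      rw [Finset.card_insert_of_notMem (fun h => hvs (Finset.mem_of_mem_erase h)),
        Finset.card_erase_of_mem hu]
      have : 1 ≤ s.card := Finset.card_pos.2 ⟨u, hu⟩
      omega
    calc alph G W = (insert v (s.erase u)).card := by rw [hcard', hcard]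
    _ ≤ alph G (W.erase u) := card_le_alph hsub hind'
  · calc alph G W = s.card := hcard.symm
    _ ≤ alph G (W.erase u) := card_le_alph
        (fun x hx => Finset.mem_erase.2 ⟨fun h => hu (h ▸ hx), hs hx⟩) hind

/-- α is additive over parts with no edges between them. -/
lemma alph_union {A B : Finset V} (hdisj : Disjoint A B)
    (hcross : ∀ x ∈ A, ∀ y ∈ B, ¬ G.Adj x y) :
    alph G (A ∪ B) = alph G A + alph G B := by
  refine le_antisymm ?_ ?_
  · obtain ⟨s, hs, hind, hcard⟩ := exists_alph G (A ∪ B)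
    rw [← hcard]
    have : s = (s ∩ A) ∪ (s ∩ B) := by
      rw [← Finset.inter_union_distrib_left, Finset.inter_eq_left.2 hs]
    rw [this, Finset.card_union_of_disjoint (hdisj.mono Finset.inter_subset_right
      Finset.inter_subset_right)]
    exact Nat.add_le_add
      (card_le_alph Finset.inter_subset_right (hind.mono Finset.inter_subset_left))
      (card_le_alph Finset.inter_subset_right (hind.mono Finset.inter_subset_left))
  · obtain ⟨s, hsA, hindA, hcardA⟩ := exists_alph G A
    obtain ⟨t, htB, hindB, hcardB⟩ := exists_alph G B
    have hst : Disjoint s t := hdisj.mono hsA htB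
    have hind : IndepIn G (s ∪ t) := by
      intro x hx y hy hxy
      rcases Finset.mem_union.1 hx with hx | hx <;> rcases Finset.mem_union.1 hy with hy | hy
      · exact hindA x hx y hy hxy
      · exact hcross x (hsA hx) y (htB hy)
      · intro h; exact hcross y (hsA hy) x (htB hx) h.symm
      · exact hindB x hx y hy hxy
    calc alph G A + alph G B = (s ∪ t).card := by
          rw [Finset.card_union_of_disjoint hst, hcardA, hcardB]
    _ ≤ alph G (A ∪ B) := card_le_alph (Finset.union_subset_union hsA htB) hind

/-- Removing a pendant vertex and its neighbor decreases α by exactly one. -/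
lemma alph_pendant {W : Finset V} {v u : V} (hv : v ∈ W) (hu : u ∈ W)
    (hadj : G.Adj v u) (hpend : ∀ y ∈ W, G.Adj v y → y = u) :
    alph G W = alph G ((W.erase v).erase u) + 1 := by
  have hvu : v ≠ u := hadj.ne
  refine le_antisymm ?_ ?_
  · obtain ⟨s, hs, hind, hcard⟩ := exists_alph G W
    -- reduce to the case v ∈ s
    have main : ∀ s : Finset V, s ⊆ W → IndepIn G s → v ∈ s →
        s.card ≤ alph G ((W.erase v).erase u) + 1 := by
      intro s hs hind hvs
      have hus : u ∉ s := fun hus => hind v hvs u hus hvu hadj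
      have hsub : s.erase v ⊆ (W.erase v).erase u := by
        intro x hx
        obtain ⟨hxv, hxs⟩ := Finset.mem_erase.1 hx
        exact Finset.mem_erase.2 ⟨fun h => hus (h ▸ hxs), Finset.mem_erase.2 ⟨hxv, hs hxs⟩⟩
      have := card_le_alph hsub (hind.mono (Finset.erase_subset _ _))
      rw [Finset.card_erase_of_mem hvs] at this
      have : 1 ≤ s.card := Finset.card_pos.2 ⟨v, hvs⟩
      have := card_le_alph hsub (hind.mono (Finset.erase_subset _ _))
      rw [Finset.card_erase_of_mem hvs] at this
      omega
    by_cases hvs : v ∈ s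
    · rw [← hcard]; exact main s hs hind hvs
    · by_cases hus : u ∈ s
      · -- swap u for v
        have hind' : IndepIn G (insert v (s.erase u)) :=
          indep_insert_pendant hpend ((Finset.erase_subset _ _).trans hs)
            (hind.mono (Finset.erase_subset _ _)) (Finset.notMem_erase _ _)
        have hsub' : insert v (s.erase u) ⊆ W := by
          intro x hx
          by_cases hxv : x = v
          · exact hxv ▸ hv
          · exact hs (Finset.mem_of_mem_erase (Finset.mem_of_mem_insert_of_ne hx hxv))
        have hcard' : (insert v (s.erase u)).card = s.card := by
          rw [Finset.card_insert_of_notMem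
            (fun h => hvs (Finset.mem_of_mem_erase h)), Finset.card_erase_of_mem hus]
          have : 1 ≤ s.card := Finset.card_pos.2 ⟨u, hus⟩
          omega
        rw [← hcard, ← hcard']
        exact main _ hsub' hind' (Finset.mem_insert_self _ _)
      · -- neither u nor v in s
        have hsub : s ⊆ (W.erase v).erase u := fun x hx =>
          Finset.mem_erase.2 ⟨fun h => hus (h ▸ hx),
            Finset.mem_erase.2 ⟨fun h => hvs (h ▸ hx), hs hx⟩⟩
        rw [← hcard]
        exact le_trans (card_le_alph hsub hind) (Nat.le_succ _)
  · obtain ⟨s, hs, hind, hcard⟩ := exists_alph G ((W.erase v).erase u)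
    have hvs : v ∉ s := fun h => (Finset.mem_erase.1 (Finset.mem_of_mem_erase (hs h))).1 rfl
    have hsW : s ⊆ W := fun x hx =>
      Finset.mem_of_mem_erase (Finset.mem_of_mem_erase (hs hx))
    have hind' : IndepIn G (insert v s) :=
      indep_insert_pendant hpend hsW hind
        (fun h => (Finset.mem_erase.1 (hs h)).1 rfl)
    have hsub : insert v s ⊆ W := by
      intro x hx
      by_cases hxv : x = v
      · exact hxv ▸ hv
      · exact hsW (Finset.mem_of_mem_insert_of_ne hx hxv)
    have := card_le_alph hsub hind'
    rw [Finset.card_insert_of_notMem hvs, hcard] at this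
    exact this
open Classical in
/-- The subtrees (nonempty connected subsets) of `W`. -/
noncomputable def subs (G : SimpleGraph V) (W : Finset V) : Finset (Finset V) :=
  W.powerset.filter (fun S => S.Nonempty ∧ ConnIn G S)

/-- Signed count of subtrees: #odd − #even. -/
noncomputable def Dsum (G : SimpleGraph V) (W : Finset V) : ℤ :=
  ∑ S ∈ subs G W, (-1 : ℤ) ^ (S.card + 1)

open Classical in
/-- Signed count of subtrees containing `u`. -/
noncomputable def DsumAt (G : SimpleGraph V) (W : Finset V) (u : V) : ℤ :=
  ∑ S ∈ (subs G W).filter (fun S => u ∈ S), (-1 : ℤ) ^ (S.card + 1)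

lemma mem_subs {W S : Finset V} :
    S ∈ subs G W ↔ S ⊆ W ∧ S.Nonempty ∧ ConnIn G S := by
  simp [subs, Finset.mem_powerset, and_assoc]

lemma subs_singleton (v : V) : subs G ({v} : Finset V) = {{v}} := by
  ext S
  simp only [mem_subs, Finset.mem_singleton]
  constructor
  · rintro ⟨hsub, ⟨x, hx⟩, -⟩
    have hxv : x = v := Finset.mem_singleton.1 (hsub hx)
    subst hxv
    exact Finset.Subset.antisymm hsub (Finset.singleton_subset_iff.2 hx)
  · rintro rfl
    exact ⟨le_refl _, ⟨v, by simp⟩, connIn_singleton v⟩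

lemma Dsum_singleton (v : V) : Dsum G ({v} : Finset V) = 1 := by
  rw [Dsum, subs_singleton, Finset.sum_singleton]
  simp

lemma DsumAt_singleton (v : V) : DsumAt G ({v} : Finset V) v = 1 := by
  rw [DsumAt, subs_singleton]
  rw [Finset.filter_singleton]
  simp

/-- The sign-reversing involution toggling a pendant vertex `v`. -/
lemma sum_sign_zero {W : Finset V} {v u' : V} (hv : v ∈ W)
    (hadj : G.Adj v u') (hpend : ∀ y ∈ W, G.Adj v y → y = u')
    (P : Finset V → Prop) [DecidablePred P]
    (hPu' : ∀ S, S ⊆ W → P S → u' ∈ S)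
    (hPe : ∀ S, S ⊆ W → P S → v ∈ S → P (S.erase v))
    (hPi : ∀ S, S ⊆ W → P S → v ∉ S → P (insert v S)) :
    ∑ S ∈ (subs G W).filter P, (-1 : ℤ) ^ (S.card + 1) = 0 := by
  have hvu' : v ≠ u' := hadj.ne
  refine Finset.sum_involution
    (fun S _ => if v ∈ S then S.erase v else insert v S) ?_ ?_ ?_ ?_
  · intro S _
    by_cases hvS : v ∈ S
    · simp only [if_pos hvS, Finset.card_erase_of_mem hvS]
      have h1 : 1 ≤ S.card := Finset.card_pos.2 ⟨v, hvS⟩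
      have : S.card - 1 + 1 = S.card := by omega
      rw [this]
      rw [show S.card = (S.card - 1) + 1 by omega]
      ring
    · simp only [if_neg hvS, Finset.card_insert_of_notMem hvS]
      ring
  · intro S _ _
    by_cases hvS : v ∈ S
    · simp only [if_pos hvS]
      intro h
      rw [← h] at hvS
      exact (Finset.notMem_erase v S) hvS
    · simp only [if_neg hvS]
      intro h
      have := Finset.mem_insert_self v S
      rw [h] at this
      exact hvS this
  · intro S hS
    rw [Finset.mem_filter, mem_subs] at hS
    obtain ⟨⟨hsub, hne, hconn⟩, hP⟩ := hS
    have hu'S : u' ∈ S := hPu' S hsub hP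
    have hpendS : ∀ z ∈ S, G.Adj v z → z = u' := fun z hz => hpend z (hsub hz)
    by_cases hvS : v ∈ S
    · simp only [if_pos hvS, Finset.mem_filter, mem_subs]
      exact ⟨⟨(Finset.erase_subset _ _).trans hsub,
        ⟨u', Finset.mem_erase.2 ⟨hvu'.symm, hu'S⟩⟩,
        connIn_erase_pendant hconn hpendS⟩, hPe S hsub hP hvS⟩
    · simp only [if_neg hvS, Finset.mem_filter, mem_subs]
      exact ⟨⟨Finset.insert_subset hv hsub, ⟨v, Finset.mem_insert_self _ _⟩,
        connIn_insert hconn hu'S hadj⟩, hPi S hsub hP hvS⟩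
  · intro S _
    by_cases hvS : v ∈ S
    · simp only [if_pos hvS, if_neg (Finset.notMem_erase v S), Finset.insert_erase hvS]
    · simp only [if_neg hvS, if_pos (Finset.mem_insert_self v S), Finset.erase_insert hvS]

/-- `DsumAt` vanishes at a vertex with a pendant neighbor. -/
lemma DsumAt_eq_zero {W : Finset V} {v u' : V} (hv : v ∈ W)
    (hadj : G.Adj v u') (hpend : ∀ y ∈ W, G.Adj v y → y = u') :
    DsumAt G W u' = 0 := by
  classical
  exact sum_sign_zero hv hadj hpend (fun S => u' ∈ S)
    (fun S _ h => h)
    (fun S _ h _ => Finset.mem_erase.2 ⟨hadj.ne', h⟩)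
    (fun S _ h _ => Finset.mem_insert_of_mem h)
/-- Deleting a pendant vertex: recursion for the signed subtree count. -/
lemma Dsum_pendant {W : Finset V} {v u : V} (hv : v ∈ W) (hu : u ∈ W)
    (hadj : G.Adj v u) (hpend : ∀ y ∈ W, G.Adj v y → y = u) :
    Dsum G W = Dsum G (W.erase v) + 1 - DsumAt G (W.erase v) u := by
  classical
  have hvu : v ≠ u := hadj.ne
  have hsplit := Finset.sum_filter_add_sum_filter_not (subs G W) (fun S => v ∈ S)
    (fun S => (-1 : ℤ) ^ (S.card + 1))
  have h2 : (subs G W).filter (fun S => ¬ v ∈ S) = subs G (W.erase v) := by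
    ext S
    simp only [Finset.mem_filter, mem_subs, Finset.subset_erase]
    tauto
  have h3 : (subs G W).filter (fun S => v ∈ S)
      = insert {v} (((subs G (W.erase v)).filter (fun S => u ∈ S)).image
          (fun S => insert v S)) := by
    ext S
    simp only [Finset.mem_filter, Finset.mem_insert, Finset.mem_image, mem_subs]
    constructor
    · rintro ⟨⟨hsub, hne, hconn⟩, hvS⟩
      by_cases hS1 : S = {v}
      · exact Or.inl hS1
      · have hnot : ¬ S ⊆ {v} := fun h => hS1 (Finset.Subset.antisymm h
            (Finset.singleton_subset_iff.2 hvS))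
        obtain ⟨x, hx, hxv⟩ := Finset.not_subset.1 hnot
        have huS : u ∈ S := pendant_neighbor_mem hconn hvS hx
          (fun h => hxv (h ▸ Finset.mem_singleton_self v))
          (fun z hz => hpend z (hsub hz))
        refine Or.inr ⟨S.erase v, ⟨⟨?_, ?_, ?_⟩, ?_⟩, Finset.insert_erase hvS⟩
        · exact fun x hx => Finset.mem_erase.2
            ⟨(Finset.mem_erase.1 hx).1, hsub (Finset.mem_of_mem_erase hx)⟩
        · exact ⟨u, Finset.mem_erase.2 ⟨hvu.symm, huS⟩⟩
        · exact connIn_erase_pendant hconn (fun z hz => hpend z (hsub hz))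
        · exact Finset.mem_erase.2 ⟨hvu.symm, huS⟩
    · rintro (rfl | ⟨S', ⟨⟨hsub, hne, hconn⟩, huS'⟩, rfl⟩)
      · exact ⟨⟨Finset.singleton_subset_iff.2 hv, ⟨v, by simp⟩, connIn_singleton v⟩, by simp⟩
      · refine ⟨⟨?_, ⟨v, Finset.mem_insert_self _ _⟩, connIn_insert hconn huS' hadj⟩,
          Finset.mem_insert_self _ _⟩
        exact Finset.insert_subset hv (hsub.trans (Finset.erase_subset _ _))
  have h5 : ∀ S' ∈ (subs G (W.erase v)).filter (fun S => u ∈ S), v ∉ S' := by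
    intro S' hS' hvS'
    exact (Finset.mem_erase.1 ((mem_subs.1 (Finset.mem_filter.1 hS').1).1 hvS')).1 rfl
  have h4 : ({v} : Finset V) ∉ (((subs G (W.erase v)).filter (fun S => u ∈ S)).image
      (fun S => insert v S)) := by
    simp only [Finset.mem_image, not_exists]
    rintro S' ⟨hS', heq⟩
    have huS' : u ∈ S' := (Finset.mem_filter.1 hS').2
    have : u ∈ ({v} : Finset V) := heq ▸ Finset.mem_insert_of_mem huS'
    exact hvu (Finset.mem_singleton.1 this).symm
  have hsum1 : ∑ S ∈ (subs G W).filter (fun S => v ∈ S), (-1 : ℤ) ^ (S.card + 1)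
      = 1 - DsumAt G (W.erase v) u := by
    rw [h3, Finset.sum_insert h4, Finset.sum_image (fun x hx y hy heq => by
      rw [← Finset.erase_insert (h5 x hx), heq, Finset.erase_insert (h5 y hy)])]
    rw [Finset.card_singleton]
    have hterm : ∀ S' ∈ (subs G (W.erase v)).filter (fun S => u ∈ S),
        (-1 : ℤ) ^ ((insert v S').card + 1) = -(-1 : ℤ) ^ (S'.card + 1) := by
      intro S' hS'
      rw [Finset.card_insert_of_notMem (h5 S' hS')]
      ring
    rw [Finset.sum_congr rfl hterm, Finset.sum_neg_distrib]
    rw [DsumAt]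
    ring
  calc Dsum G W
      = ∑ S ∈ (subs G W).filter (fun S => v ∈ S), (-1 : ℤ) ^ (S.card + 1)
        + ∑ S ∈ (subs G W).filter (fun S => ¬ v ∈ S), (-1 : ℤ) ^ (S.card + 1) := by
        rw [Dsum, ← hsplit]
    _ = (1 - DsumAt G (W.erase v) u) + Dsum G (W.erase v) := by rw [hsum1, h2, Dsum]
    _ = Dsum G (W.erase v) + 1 - DsumAt G (W.erase v) u := by ring

open Classical in
/-- The connected component of `u` within `A`. -/
noncomputable def comp (G : SimpleGraph V) (A : Finset V) (u : V) : Finset V :=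
  A.filter (fun x => ReachIn G A u x)

lemma mem_comp {A : Finset V} {u x : V} :
    x ∈ comp G A u ↔ x ∈ A ∧ ReachIn G A u x := by
  simp [comp]

lemma comp_subset {A : Finset V} {u : V} : comp G A u ⊆ A :=
  fun _ hx => (mem_comp.1 hx).1

lemma mem_comp_self {A : Finset V} {u : V} (hu : u ∈ A) : u ∈ comp G A u :=
  mem_comp.2 ⟨hu, ReachIn.refl hu⟩

lemma comp_reach {A : Finset V} {u x : V} (hx : x ∈ comp G A u) :
    ReachIn G (comp G A u) u x := by
  classical
  obtain ⟨hxA, p, hp⟩ := mem_comp.1 hx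
  refine ⟨p, fun z hz => mem_comp.2 ⟨hp z hz, ⟨p.takeUntil z hz, fun w hw =>
    hp w (Walk.support_takeUntil_subset _ _ hw)⟩⟩⟩

lemma comp_connIn {A : Finset V} {u : V} : ConnIn G (comp G A u) := by
  intro x hx y hy
  exact (comp_reach hx).symm.trans (comp_reach hy)

lemma comp_closed {A : Finset V} {u x y : V} (hx : x ∈ comp G A u) (hy : y ∈ A)
    (hadj : G.Adj x y) : y ∈ comp G A u := by
  obtain ⟨hxA, hr⟩ := mem_comp.1 hx
  exact mem_comp.2 ⟨hy, hr.trans (reachIn_of_adj hadj hxA hy)⟩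

/-- Localization of `DsumAt` at `u` to the component of `u` after removing `u'`,
given a pendant vertex `v` attached to `u'`. -/
lemma DsumAt_localize {W : Finset V} {v u' u : V} (hv : v ∈ W)
    (hadj : G.Adj v u') (hpend : ∀ y ∈ W, G.Adj v y → y = u')
    (huv : u ≠ v) (huu' : u ≠ u') :
    DsumAt G W u = DsumAt G (comp G (W.erase u') u) u := by
  classical
  set C := comp G (W.erase u') u with hC
  have hCsub : C ⊆ W.erase u' := comp_subset
  have hzero : ∑ S ∈ (subs G W).filter (fun S => u ∈ S ∧ u' ∈ S),
      (-1 : ℤ) ^ (S.card + 1) = 0 := by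
    refine sum_sign_zero hv hadj hpend _ (fun S _ h => h.2) ?_ ?_
    · intro S _ h hvS
      exact ⟨Finset.mem_erase.2 ⟨huv, h.1⟩, Finset.mem_erase.2 ⟨hadj.ne', h.2⟩⟩
    · intro S _ h _
      exact ⟨Finset.mem_insert_of_mem h.1, Finset.mem_insert_of_mem h.2⟩
  have hsplit := Finset.sum_filter_add_sum_filter_not
    ((subs G W).filter (fun S => u ∈ S)) (fun S => u' ∈ S)
    (fun S => (-1 : ℤ) ^ (S.card + 1))
  rw [Finset.filter_filter, Finset.filter_filter] at hsplit
  have hset : (subs G W).filter (fun S => u ∈ S ∧ ¬ u' ∈ S)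
      = (subs G C).filter (fun S => u ∈ S) := by
    ext S
    simp only [Finset.mem_filter, mem_subs]
    constructor
    · rintro ⟨⟨hsub, hne, hconn⟩, huS, hu'S⟩
      have hsub' : S ⊆ W.erase u' := Finset.subset_erase.2 ⟨hsub, hu'S⟩
      exact ⟨⟨fun x hx => mem_comp.2 ⟨hsub' hx, (hconn u huS x hx).mono hsub'⟩,
        hne, hconn⟩, huS⟩
    · rintro ⟨⟨hsub, hne, hconn⟩, huS⟩
      have hsub' : S ⊆ W.erase u' := hsub.trans hCsub
      exact ⟨⟨hsub'.trans (Finset.erase_subset _ _), hne, hconn⟩, huS,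
        fun h => (Finset.mem_erase.1 (hsub' h)).1 rfl⟩
  have : DsumAt G W u = ∑ S ∈ (subs G W).filter (fun S => u ∈ S ∧ u' ∈ S),
        (-1 : ℤ) ^ (S.card + 1)
      + ∑ S ∈ (subs G W).filter (fun S => u ∈ S ∧ ¬ u' ∈ S),
        (-1 : ℤ) ^ (S.card + 1) := by
    rw [DsumAt, ← hsplit]
  rw [this, hzero, hset, zero_add, DsumAt]
/-- A finite tree with at least two vertices has two pendant vertices. -/
lemma exists_two_pendant {W : Finset V} (hG : G.IsAcyclic) (hconn : ConnIn G W)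
    (hcard : 2 ≤ W.card) :
    ∃ v₁ ∈ W, ∃ v₂ ∈ W, v₁ ≠ v₂ ∧
      (∃ u ∈ W, G.Adj v₁ u ∧ ∀ y ∈ W, G.Adj v₁ y → y = u) ∧
      (∃ u ∈ W, G.Adj v₂ u ∧ ∀ y ∈ W, G.Adj v₂ y → y = u) := by
  classical
  have hne : W.Nonempty := Finset.card_pos.1 (by omega)
  have hcardW : Fintype.card ↥(W : Set V) = W.card := by
    rw [← Fintype.card_coe W]
    exact Fintype.card_congr (Equiv.subtypeEquivRight (fun x => by simp))
  set H : SimpleGraph ↥(W : Set V) := G.induce (W : Set V) with hH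
  haveI : DecidableRel H.Adj := Classical.decRel _
  have hHconn : H.Connected := (connIn_iff_induce_connected hne).1 hconn
  have hHadj : ∀ a b : ↥(W : Set V), H.Adj a b ↔ G.Adj a.1 b.1 := by
    intro a b; exact Iff.rfl
  have hHacyclic : H.IsAcyclic := by
    intro x p hp
    exact hG (p.map (SimpleGraph.Embedding.induce (W : Set V) (G := G)).toHom)
      ((Walk.map_isCycle_iff_of_injective
        (SimpleGraph.Embedding.induce (W : Set V) (G := G)).injective).2 hp)
  have hTree : H.IsTree := ⟨hHconn, hHacyclic⟩
  have hedge : H.edgeFinset.card + 1 = W.card := by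
    rw [← hcardW]; exact hTree.card_edgeFinset
  have hdegsum : ∑ a : ↥(W : Set V), H.degree a = 2 * H.edgeFinset.card :=
    H.sum_degrees_eq_twice_card_edges
  have hdegpos : ∀ a : ↥(W : Set V), 0 < H.degree a := by
    intro a
    rw [H.degree_pos_iff_exists_adj]
    obtain ⟨b, hb⟩ := Fintype.exists_ne_of_one_lt_card (by omega) a
    obtain ⟨p⟩ := hHconn.preconnected a b
    cases p with
    | nil => exact absurd rfl hb.symm
    | cons h q => exact ⟨_, h⟩
  set L := Finset.univ.filter (fun a : ↥(W : Set V) => H.degree a = 1) with hL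
  have hLcard : 2 ≤ L.card := by
    by_contra hlt
    push_neg at hlt
    have h1 : ∑ a ∈ L, H.degree a + ∑ a ∈ Finset.univ.filter
        (fun a : ↥(W : Set V) => ¬ H.degree a = 1), H.degree a
        = ∑ a : ↥(W : Set V), H.degree a :=
      Finset.sum_filter_add_sum_filter_not _ _ _
    have h2 : ∀ a ∈ Finset.univ.filter (fun a : ↥(W : Set V) => ¬ H.degree a = 1),
        2 ≤ H.degree a := by
      intro a ha
      have := (Finset.mem_filter.1 ha).2
      have := hdegpos a
      omega
    have h3 : (Finset.univ.filter (fun a : ↥(W : Set V) => ¬ H.degree a = 1)).card * 2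
        ≤ ∑ a ∈ Finset.univ.filter (fun a : ↥(W : Set V) => ¬ H.degree a = 1),
          H.degree a := by
      calc _ = ∑ _a ∈ Finset.univ.filter (fun a : ↥(W : Set V) => ¬ H.degree a = 1),
          2 := by rw [Finset.sum_const, smul_eq_mul]
      _ ≤ _ := Finset.sum_le_sum h2
    have h4 : L.card + (Finset.univ.filter
        (fun a : ↥(W : Set V) => ¬ H.degree a = 1)).card = W.card := by
      rw [← hcardW, ← Finset.card_univ]
      exact Finset.card_filter_add_card_filter_not _
    have h5 : ∑ a ∈ L, H.degree a = L.card := by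
      rw [Finset.sum_congr rfl (fun a ha => (Finset.mem_filter.1 ha).2), Finset.sum_const,
        smul_eq_mul, mul_one]
    omega
  obtain ⟨a, ha, b, hb, hab⟩ := Finset.one_lt_card.1 (by omega : 1 < L.card)
  have pend : ∀ a : ↥(W : Set V), H.degree a = 1 →
      ∃ u ∈ W, G.Adj a.1 u ∧ ∀ y ∈ W, G.Adj a.1 y → y = u := by
    intro a hdeg
    rw [← H.card_neighborFinset_eq_degree] at hdeg
    obtain ⟨u₀, hu₀⟩ := Finset.card_eq_one.1 hdeg
    have hu₀adj : H.Adj a u₀ := by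
      rw [← SimpleGraph.mem_neighborFinset, hu₀]; simp
    refine ⟨u₀.1, by simpa using u₀.2, (hHadj _ _).1 hu₀adj, ?_⟩
    intro y hy hadj
    have : (⟨y, by simpa using hy⟩ : ↥(W : Set V)) ∈ H.neighborFinset a := by
      rw [SimpleGraph.mem_neighborFinset, hHadj]
      exact hadj
    rw [hu₀] at this
    have := Finset.mem_singleton.1 this
    exact congrArg Subtype.val this
  refine ⟨a.1, by simpa using a.2, b.1, by simpa using b.2, ?_,
    pend a (Finset.mem_filter.1 ha).2, pend b (Finset.mem_filter.1 hb).2⟩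
  intro h
  exact hab (Subtype.ext h)
/-- Key lemma: for a subtree `W` and `u ∈ W`, the signed count of subtrees containing `u`
equals `α(W) - α(W \ u)`. -/
lemma DsumAt_eq_aux (hG : G.IsAcyclic) :
    ∀ (n : ℕ) (W : Finset V), W.card ≤ n → ConnIn G W → ∀ u ∈ W,
      DsumAt G W u = (alph G W : ℤ) - (alph G (W.erase u) : ℤ) := by
  intro n
  induction n with
  | zero =>
    intro W hW _ u hu
    have := Finset.card_pos.2 ⟨u, hu⟩
    omega
  | succ n ih =>
    intro W hWcard hconn u hu
    by_cases h1 : W.card = 1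
    · obtain ⟨a, ha⟩ := Finset.card_eq_one.1 h1
      subst ha
      have hua : u = a := Finset.mem_singleton.1 hu
      subst hua
      rw [DsumAt_singleton, alph_singleton, Finset.erase_singleton, alph_empty]
      simp
    · have h2 : 2 ≤ W.card := by
        have := Finset.card_pos.2 ⟨u, hu⟩
        omega
      obtain ⟨v₁, hv₁, v₂, hv₂, hne12, hp1, hp2⟩ := exists_two_pendant hG hconn h2
      obtain ⟨v, hvW, hvu, u', hu'W, hadj, hpend⟩ :
          ∃ v ∈ W, v ≠ u ∧ ∃ u' ∈ W, G.Adj v u' ∧ (∀ y ∈ W, G.Adj v y → y = u') := by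
        by_cases h : v₁ = u
        · obtain ⟨u', hu'W, hadj, hpend⟩ := hp2
          exact ⟨v₂, hv₂, fun hh => hne12 (h.trans hh.symm), u', hu'W, hadj, hpend⟩
        · obtain ⟨u', hu'W, hadj, hpend⟩ := hp1
          exact ⟨v₁, hv₁, h, u', hu'W, hadj, hpend⟩
      by_cases hcase : u' = u
      · subst hcase
        rw [DsumAt_eq_zero hvW hadj hpend, alph_erase_of_pendant hvW hadj hpend]
        ring
      · have huu' : u ≠ u' := fun h => hcase h.symm
        have hloc := DsumAt_localize hvW hadj hpend (Ne.symm hvu) huu'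
        have huC : u ∈ comp G (W.erase u') u :=
          mem_comp_self (Finset.mem_erase.2 ⟨huu', hu⟩)
        have hCcard : (comp G (W.erase u') u).card ≤ n := by
          have hle : (comp G (W.erase u') u).card ≤ (W.erase u').card :=
            Finset.card_le_card comp_subset
          rw [Finset.card_erase_of_mem hu'W] at hle
          omega
        have hIH := ih (comp G (W.erase u') u) hCcard comp_connIn u huC
        have hA1 : alph G (W.erase u') = alph G W := alph_erase_of_pendant hvW hadj hpend
        have hA2 : alph G ((W.erase u).erase u') = alph G (W.erase u) := by
          refine alph_erase_of_pendant (W := W.erase u)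
            (Finset.mem_erase.2 ⟨hvu, hvW⟩) hadj ?_
          exact fun y hy ha => hpend y (Finset.mem_of_mem_erase hy) ha
        have hsplitW : W.erase u' = comp G (W.erase u') u ∪ ((W.erase u') \ comp G (W.erase u') u) :=
          (Finset.union_sdiff_of_subset comp_subset).symm
        have hdisj : Disjoint (comp G (W.erase u') u) ((W.erase u') \ comp G (W.erase u') u) :=
          Finset.disjoint_sdiff
        have hcross : ∀ x ∈ comp G (W.erase u') u,
            ∀ y ∈ (W.erase u') \ comp G (W.erase u') u, ¬ G.Adj x y := by
          intro x hx y hy hadj'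
          exact (Finset.mem_sdiff.1 hy).2 (comp_closed hx (Finset.mem_sdiff.1 hy).1 hadj')
        have hB1 : alph G (W.erase u') = alph G (comp G (W.erase u') u)
            + alph G ((W.erase u') \ comp G (W.erase u') u) := by
          conv_lhs => rw [hsplitW]
          exact alph_union hdisj hcross
        have hu_nR : u ∉ (W.erase u') \ comp G (W.erase u') u :=
          fun h => (Finset.mem_sdiff.1 h).2 huC
        have hsplit2 : (W.erase u).erase u' = ((comp G (W.erase u') u).erase u)
            ∪ ((W.erase u') \ comp G (W.erase u') u) := by
          have hswap : (W.erase u).erase u' = (W.erase u').erase u := by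
            ext x
            simp only [Finset.mem_erase]
            tauto
          rw [hswap]
          conv_lhs => rw [hsplitW]
          rw [Finset.erase_union_distrib, Finset.erase_eq_of_notMem hu_nR]
        have hB2 : alph G ((W.erase u).erase u') = alph G ((comp G (W.erase u') u).erase u)
            + alph G ((W.erase u') \ comp G (W.erase u') u) := by
          rw [hsplit2]
          exact alph_union (hdisj.mono_left (Finset.erase_subset _ _))
            (fun x hx => hcross x (Finset.mem_of_mem_erase hx))
        rw [hloc, hIH]
        have e1 : alph G W = alph G (comp G (W.erase u') u)
            + alph G ((W.erase u') \ comp G (W.erase u') u) := by rw [← hA1, hB1]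
        have e2 : alph G (W.erase u) = alph G ((comp G (W.erase u') u).erase u)
            + alph G ((W.erase u') \ comp G (W.erase u') u) := by rw [← hA2, hB2]
        rw [e1, e2]
        push_cast
        ring

lemma DsumAt_eq (hG : G.IsAcyclic) {W : Finset V} (hconn : ConnIn G W) {u : V} (hu : u ∈ W) :
    DsumAt G W u = (alph G W : ℤ) - (alph G (W.erase u) : ℤ) :=
  DsumAt_eq_aux hG W.card W le_rfl hconn u hu

/-- Jamison's theorem, internal form. -/
lemma Dsum_eq_alph_aux (hG : G.IsAcyclic) :
    ∀ (n : ℕ) (W : Finset V), W.card ≤ n → W.Nonempty → ConnIn G W →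
      Dsum G W = (alph G W : ℤ) := by
  intro n
  induction n with
  | zero =>
    intro W hW hne _
    have := Finset.card_pos.2 hne
    omega
  | succ n ih =>
    intro W hWcard hne hconn
    by_cases h1 : W.card = 1
    · obtain ⟨a, ha⟩ := Finset.card_eq_one.1 h1
      subst ha
      rw [Dsum_singleton, alph_singleton]
      simp
    · have h2 : 2 ≤ W.card := by
        have := Finset.card_pos.2 hne
        omega
      obtain ⟨v, hvW, -, -, -, hp1, -⟩ := exists_two_pendant hG hconn h2
      obtain ⟨u, huW, hadj, hpend⟩ := hp1
      have huv : u ≠ v := hadj.ne'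
      have hconn' : ConnIn G (W.erase v) := connIn_erase_pendant hconn
        (fun z hz => hpend z hz)
      have huW' : u ∈ W.erase v := Finset.mem_erase.2 ⟨huv, huW⟩
      have hcard' : (W.erase v).card ≤ n := by
        rw [Finset.card_erase_of_mem hvW]
        omega
      rw [Dsum_pendant hvW huW hadj hpend, ih (W.erase v) hcard' ⟨u, huW'⟩ hconn',
        DsumAt_eq hG hconn' huW']
      have := alph_pendant hvW huW hadj hpend
      rw [this]
      push_cast
      ring
lemma ncard_setOf_eq_card_filter [Fintype V] (p : Finset V → Prop) [DecidablePred p]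
    (q : Set V → Prop) (hpq : ∀ s : Finset V, p s ↔ q ↑s) :
    {S : Set V | q S}.ncard = (Finset.univ.filter p).card := by
  classical
  have himg : {S : Set V | q S} = (fun s : Finset V => (↑s : Set V)) '' {s : Finset V | p s} := by
    ext S
    constructor
    · intro hS
      refine ⟨S.toFinset, ?_, Set.coe_toFinset S⟩
      rw [Set.mem_setOf_eq, hpq, Set.coe_toFinset]
      exact hS
    · rintro ⟨s, hs, rfl⟩
      exact (hpq s).1 hs
  rw [himg, Set.ncard_image_of_injective _ Finset.coe_injective,
    Set.ncard_eq_toFinset_card', Set.toFinset_setOf]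

lemma parity_filter_subs [Fintype V] {G : SimpleGraph V} :
    Dsum G Finset.univ
      = (((subs G Finset.univ).filter (fun S => Odd S.card)).card : ℤ)
        - (((subs G Finset.univ).filter (fun S => Even S.card)).card : ℤ) := by
  classical
  rw [Dsum, ← Finset.sum_filter_add_sum_filter_not (subs G Finset.univ)
    (fun S => Odd S.card) (fun S => (-1 : ℤ) ^ (S.card + 1))]
  have h1 : ∀ S ∈ (subs G Finset.univ).filter (fun S => Odd S.card),
      (-1 : ℤ) ^ (S.card + 1) = 1 :=
    fun S hS => Even.neg_one_pow ((Finset.mem_filter.1 hS).2.add_one)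
  have h2 : ∀ S ∈ (subs G Finset.univ).filter (fun S => ¬ Odd S.card),
      (-1 : ℤ) ^ (S.card + 1) = -1 :=
    fun S hS => Odd.neg_one_pow
      ((Nat.not_odd_iff_even.1 (Finset.mem_filter.1 hS).2).add_one)
  have h3 : (subs G Finset.univ).filter (fun S => ¬ Odd S.card)
      = (subs G Finset.univ).filter (fun S => Even S.card) := by
    ext S
    simp [Nat.not_odd_iff_even]
  rw [Finset.sum_congr rfl h1, Finset.sum_congr rfl h2, h3, Finset.sum_const,
    Finset.sum_const]
  simp [nsmul_eq_mul]
  ring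
end JamisonInternal

/-- Jamison's theorem: in a finite tree, the number of odd subtrees minus the number of
even subtrees equals the independence number. -/
theorem odd_minus_even_subtrees_eq_indepNum {V : Type*} [Fintype V] [Nonempty V]
    (G : SimpleGraph V) (hT : G.IsTree) :
    ({S : Set V | S.Nonempty ∧ (G.induce S).Connected ∧ Odd S.ncard}.ncard : ℤ) -
      ({S : Set V | S.Nonempty ∧ (G.induce S).Connected ∧ Even S.ncard}.ncard : ℤ) =
      ((sSup {n : ℕ | ∃ s : Finset V,
        (∀ x ∈ s, ∀ y ∈ s, x ≠ y → ¬ G.Adj x y) ∧ s.card = n} : ℕ) : ℤ) := by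
  classical
  have hconn : ConnIn G Finset.univ := by
    intro x _ y _
    obtain ⟨p⟩ := hT.isConnected.preconnected x y
    exact ⟨p, fun z _ => Finset.mem_univ z⟩
  have hDsum : Dsum G Finset.univ = (alph G Finset.univ : ℤ) :=
    Dsum_eq_alph_aux hT.IsAcyclic Finset.univ.card Finset.univ le_rfl
      Finset.univ_nonempty hconn
  have hRHS : sSup {n : ℕ | ∃ s : Finset V,
      (∀ x ∈ s, ∀ y ∈ s, x ≠ y → ¬ G.Adj x y) ∧ s.card = n} = alph G Finset.univ := by
    rw [alph]
    congr 1
    ext n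
    constructor
    · rintro ⟨s, hind, rfl⟩
      exact ⟨s, Finset.subset_univ s, hind, rfl⟩
    · rintro ⟨s, -, hind, rfl⟩
      exact ⟨s, hind, rfl⟩
  have key : ∀ (pp : ℕ → Prop), ∀ _ : DecidablePred pp,
      {S : Set V | S.Nonempty ∧ (G.induce S).Connected ∧ pp S.ncard}.ncard
        = ((subs G Finset.univ).filter (fun S => pp S.card)).card := by
    intro pp _
    have hfe : (subs G Finset.univ).filter (fun S => pp S.card)
        = Finset.univ.filter (fun s : Finset V => (s ∈ subs G Finset.univ) ∧ pp s.card) := by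
      ext S
      simp [Finset.mem_filter]
    rw [hfe]
    refine ncard_setOf_eq_card_filter _ _ ?_
    intro s
    rw [mem_subs]
    constructor
    · rintro ⟨⟨-, hne, hc⟩, hp⟩
      refine ⟨by simpa using hne, (connIn_iff_induce_connected hne).1 hc, ?_⟩
      rwa [Set.ncard_coe_finset]
    · rintro ⟨hne, hc, hp⟩
      have hne' : s.Nonempty := by simpa using hne
      exact ⟨⟨Finset.subset_univ s, hne', (connIn_iff_induce_connected hne').2 hc⟩,
        by rwa [Set.ncard_coe_finset] at hp⟩
  rw [key (fun n => Odd n) inferInstance, key (fun n => Even n) inferInstance, hRHS,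
    ← hDsum, parity_filter_subs]
end

section
/- For every odd integer k ≥ 3, the graph R_k satisfies c_o(R_k) = 2^k and c_e(R_k) = k. -/
/-!
The vertices `a_i` and `b_i` have degree two in `R_k`, so a cycle through one of them contains
the whole path `v_i a_i b_i v_(i+1)`; and a cycle contained in another cycle equals it. Hence a
cycle that uses both the edge `v_i v_(i+1)` and the vertex `a_i` is the `4`-cycle
`v_i a_i b_i v_(i+1)`. Any other cycle lies in, and therefore equals, the cycle that runs once
around all the `v_i`, taking the detour through `a_i, b_i` exactly for the `i` in
`S = {i | a_i lies on the cycle}`. There are `k` cycles of the first kind, all even, and `2^k` of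
the second, with `k + 2|S|` vertices each, an odd number since `k` is odd.
-/

open SimpleGraph Filter

/-- The graph `R_k`: a `k`-cycle `v_0 … v_(k-1)` where each edge `v_i v_(i+1)` lies on an
attached 4-cycle `v_i a_i b_i v_(i+1)`.  Vertex `(i, 0)` is `v_i`, `(i, 1)` is `a_i`,
`(i, 2)` is `b_i`. -/
def RGraph (k : ℕ) : SimpleGraph (ZMod k × Fin 3) :=
  SimpleGraph.fromRel (fun p q =>
    (p.2 = 0 ∧ q.2 = 0 ∧ q.1 = p.1 + 1) ∨
    (p.2 = 0 ∧ q.2 = 1 ∧ q.1 = p.1) ∨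
    (p.2 = 1 ∧ q.2 = 2 ∧ q.1 = p.1) ∨
    (p.2 = 2 ∧ q.2 = 0 ∧ q.1 = p.1 + 1))


namespace SimpleGraph

variable {V : Type*} {G : SimpleGraph V}

theorem Walk.IsCycle.isCycleSub_toSubgraph {u : V} {c : G.Walk u u} (hc : c.IsCycle) :
    c.toSubgraph.IsCycleSub :=
  ⟨⟨u, c.start_mem_verts_toSubgraph⟩, c.toSubgraph_connected.coe,
    fun _ hv ↦ hc.ncard_neighborSet_toSubgraph_eq_two (c.mem_verts_toSubgraph.1 hv)⟩

namespace Subgraph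

variable {H K : G.Subgraph}

theorem ncard_neighborSet_eq_two {v x y : V} (hN : ∀ w, H.Adj v w ↔ w = x ∨ w = y)
    (hxy : x ≠ y) : (H.neighborSet v).ncard = 2 := by
  rw [← Set.ncard_pair hxy]
  exact congrArg Set.ncard (Set.ext hN)

theorem IsCycleSub.adj_iff_of_ncard_neighborSet_eq_two (hH : H.IsCycleSub) {v w : V}
    (hv : v ∈ H.verts) (hG : (G.neighborSet v).ncard = 2) : H.Adj v w ↔ G.Adj v w :=
  Set.ext_iff.1 (Set.eq_of_subset_of_ncard_le (H.neighborSet_subset v)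
    (by rw [hG, hH.2.2 v hv]) (Set.finite_of_ncard_ne_zero (by rw [hG]; norm_num))) w

theorem IsCycleSub.neighborSet_eq_of_le (hK : K.IsCycleSub) (hH : H.IsCycleSub) (hKH : K ≤ H)
    {v : V} (hv : v ∈ K.verts) : K.neighborSet v = H.neighborSet v := by
  have hvH := hKH.1 hv
  exact Set.eq_of_subset_of_ncard_le (neighborSet_subset_of_subgraph hKH v)
    (by rw [hK.2.2 v hv, hH.2.2 v hvH])
    (Set.finite_of_ncard_ne_zero (by rw [hH.2.2 v hvH]; norm_num))

/-- The vertex set of `K` is closed under the adjacency of `H`, and `H` is connected. -/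
theorem IsCycleSub.eq_of_le (hK : K.IsCycleSub) (hH : H.IsCycleSub) (hKH : K ≤ H) : K = H := by
  have hadj : ∀ {v w}, v ∈ K.verts → (K.Adj v w ↔ H.Adj v w) := fun hv ↦
    Set.ext_iff.1 (hK.neighborSet_eq_of_le hH hKH hv) _
  have hverts : K.verts = H.verts := by
    refine hKH.1.antisymm fun w hw ↦ ?_
    obtain ⟨v, hv⟩ := hK.1
    obtain ⟨p⟩ := hH.2.1.preconnected ⟨v, hKH.1 hv⟩ ⟨w, hw⟩
    suffices ∀ {x y : H.verts} (p : H.coe.Walk x y), x.1 ∈ K.verts → y.1 ∈ K.verts from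
      this p hv
    intro x y p
    induction p with
    | nil => exact id
    | cons hxy _ ih => exact fun hx ↦ ih ((hadj hx).2 hxy).snd_mem
  refine Subgraph.ext hverts ?_
  ext v w
  exact ⟨fun h ↦ (hadj h.fst_mem).1 h, fun h ↦ (hadj (hverts ▸ h.fst_mem)).2 h⟩

end Subgraph

end SimpleGraph

namespace ZMod

variable {k : ℕ}

theorem one_ne_zero_of_one_lt (hk : 1 < k) : (1 : ZMod k) ≠ 0 :=
  have : Fact (1 < k) := ⟨hk⟩
  one_ne_zero

theorem two_ne_zero_of_two_lt (hk : 2 < k) : (2 : ZMod k) ≠ 0 := by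
  rw [← Nat.cast_ofNat, ne_eq, ZMod.natCast_eq_zero_iff]
  exact Nat.not_dvd_of_pos_of_lt two_pos hk

end ZMod

theorem Fin.eq_zero_or_eq_one_or_eq_two (t : Fin 3) : t = 0 ∨ t = 1 ∨ t = 2 := by
  revert t
  decide

namespace RGraph

variable {k : ℕ}

theorem adj_zero_one (i : ZMod k) : (RGraph k).Adj (i, 0) (i, 1) := by simp [RGraph]

theorem adj_one_two (i : ZMod k) : (RGraph k).Adj (i, 1) (i, 2) := by simp [RGraph]

theorem adj_two_succ (i : ZMod k) : (RGraph k).Adj (i, 2) (i + 1, 0) := by simp [RGraph]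

theorem adj_zero_succ (hk : 1 < k) (i : ZMod k) : (RGraph k).Adj (i, 0) (i + 1, 0) := by
  simp [RGraph, ZMod.one_ne_zero_of_one_lt hk]

theorem adj_one (i : ZMod k) (q : ZMod k × Fin 3) :
    (RGraph k).Adj (i, 1) q ↔ q = (i, 0) ∨ q = (i, 2) := by
  obtain ⟨j, t⟩ := q
  fin_cases t <;> simp [RGraph, eq_comm]

theorem adj_two (i : ZMod k) (q : ZMod k × Fin 3) :
    (RGraph k).Adj (i, 2) q ↔ q = (i, 1) ∨ q = (i + 1, 0) := by
  obtain ⟨j, t⟩ := q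
  fin_cases t <;> simp [RGraph, eq_comm]

theorem adj_zero (hk : 1 < k) (i : ZMod k) (q : ZMod k × Fin 3) :
    (RGraph k).Adj (i, 0) q ↔
      q = (i + 1, 0) ∨ q = (i, 1) ∨ q = (i - 1, 0) ∨ q = (i - 1, 2) := by
  obtain ⟨j, t⟩ := q
  fin_cases t <;> simp [RGraph, eq_comm, eq_sub_iff_add_eq]
  rintro (rfl | rfl) <;> simp [ZMod.one_ne_zero_of_one_lt hk]

theorem chord_eq_chord_iff (hk : 2 < k) {i j : ZMod k} :
    s(((i, 0) : ZMod k × Fin 3), (i + 1, 0)) = s((j, 0), (j + 1, 0)) ↔ i = j := by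
  refine ⟨fun h ↦ ?_, by rintro rfl; rfl⟩
  rcases Sym2.eq_iff.1 h with h | ⟨h1, h2⟩
  · simpa using h.1
  · simp only [Prod.mk.injEq, and_true] at h1 h2
    subst h1
    exact absurd (by linear_combination h2) (ZMod.two_ne_zero_of_two_lt hk)

/-- The cycle through all `v_i` that takes the detour `v_i a_i b_i v_(i+1)` for `i ∈ S` and the
edge `v_i v_(i+1)` for `i ∉ S`. -/
def ringCycle (S : Set (ZMod k)) : (RGraph k).Subgraph :=
  ((⊤ : (RGraph k).Subgraph).induce {p | p.2 = 0 ∨ p.1 ∈ S}).deleteEdges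
    ((fun i ↦ s((i, 0), (i + 1, 0))) '' S)

section ringCycle

variable {S : Set (ZMod k)}

theorem mem_ringCycle_verts {p : ZMod k × Fin 3} :
    p ∈ (ringCycle S).verts ↔ p.2 = 0 ∨ p.1 ∈ S := Iff.rfl

theorem ringCycle_adj {p q : ZMod k × Fin 3} :
    (ringCycle S).Adj p q ↔
      ((p.2 = 0 ∨ p.1 ∈ S) ∧ (q.2 = 0 ∨ q.1 ∈ S) ∧ (RGraph k).Adj p q) ∧
        ∀ i ∈ S, s((i, 0), (i + 1, 0)) ≠ s(p, q) := by
  simp [ringCycle]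

theorem ringCycle_adj_zero_succ (hk : 2 < k) (j : ZMod k) :
    (ringCycle S).Adj (j, 0) (j + 1, 0) ↔ j ∉ S := by
  simp only [ringCycle_adj, true_or, adj_zero_succ (by omega : 1 < k), and_self, true_and, ne_eq,
    chord_eq_chord_iff hk]
  exact ⟨fun h hj ↦ h j hj rfl, fun hj i hi hij ↦ hj (hij ▸ hi)⟩

theorem ringCycle_adj_zero_one (j : ZMod k) : (ringCycle S).Adj (j, 0) (j, 1) ↔ j ∈ S := by
  simp [ringCycle_adj, adj_zero_one]

theorem ringCycle_adj_one_two (j : ZMod k) : (ringCycle S).Adj (j, 1) (j, 2) ↔ j ∈ S := by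
  simp [ringCycle_adj, adj_one]

theorem ringCycle_adj_two_succ (j : ZMod k) :
    (ringCycle S).Adj (j, 2) (j + 1, 0) ↔ j ∈ S := by
  simp [ringCycle_adj, adj_two]

theorem ringCycle_adj_zero (hk : 3 ≤ k) (j : ZMod k) (q : ZMod k × Fin 3) :
    (ringCycle S).Adj (j, 0) q ↔ (q = (j + 1, 0) ∧ j ∉ S) ∨ (q = (j, 1) ∧ j ∈ S) ∨
      (q = (j - 1, 0) ∧ j - 1 ∉ S) ∨ (q = (j - 1, 2) ∧ j - 1 ∈ S) := by
  have hpred0 : (ringCycle S).Adj (j, 0) (j - 1, 0) ↔ j - 1 ∉ S := by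
    rw [Subgraph.adj_comm, ← ringCycle_adj_zero_succ hk, sub_add_cancel]
  have hpred2 : (ringCycle S).Adj (j, 0) (j - 1, 2) ↔ j - 1 ∈ S := by
    rw [Subgraph.adj_comm, ← ringCycle_adj_two_succ, sub_add_cancel]
  constructor
  · intro h
    rcases (adj_zero (by omega) j q).1 h.adj_sub with rfl | rfl | rfl | rfl
    · exact Or.inl ⟨rfl, (ringCycle_adj_zero_succ hk j).1 h⟩
    · exact Or.inr <| Or.inl ⟨rfl, (ringCycle_adj_zero_one j).1 h⟩
    · exact Or.inr <| Or.inr <| Or.inl ⟨rfl, hpred0.1 h⟩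
    · exact Or.inr <| Or.inr <| Or.inr ⟨rfl, hpred2.1 h⟩
  · rintro (⟨rfl, h⟩ | ⟨rfl, h⟩ | ⟨rfl, h⟩ | ⟨rfl, h⟩)
    exacts [(ringCycle_adj_zero_succ hk j).2 h, (ringCycle_adj_zero_one j).2 h, hpred0.2 h,
      hpred2.2 h]

theorem ncard_ringCycle_neighborSet (hk : 3 ≤ k) {p : ZMod k × Fin 3}
    (hp : p ∈ (ringCycle S).verts) : ((ringCycle S).neighborSet p).ncard = 2 := by
  obtain ⟨j, t⟩ := p
  obtain rfl | rfl | rfl := t.eq_zero_or_eq_one_or_eq_two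
  · classical
    have : j + 1 ≠ j - 1 := fun h ↦
      ZMod.two_ne_zero_of_two_lt hk (by linear_combination h)
    refine Subgraph.ncard_neighborSet_eq_two (x := if j ∈ S then (j, 1) else (j + 1, 0))
      (y := if j - 1 ∈ S then (j - 1, 2) else (j - 1, 0)) (fun q ↦ ?_) ?_
    · rw [ringCycle_adj_zero hk]
      split_ifs with hj hj' hj' <;> simp [hj, hj']
    · split_ifs <;> simp [this]
  · have hj : j ∈ S := by simpa [mem_ringCycle_verts] using hp
    refine Subgraph.ncard_neighborSet_eq_two (x := (j, 0)) (y := (j, 2)) (fun q ↦ ?_) (by simp)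
    refine ⟨fun h ↦ (adj_one j q).1 h.adj_sub, ?_⟩
    rintro (rfl | rfl)
    exacts [((ringCycle_adj_zero_one j).2 hj).symm, (ringCycle_adj_one_two j).2 hj]
  · have hj : j ∈ S := by simpa [mem_ringCycle_verts] using hp
    refine Subgraph.ncard_neighborSet_eq_two (x := (j, 1)) (y := (j + 1, 0)) (fun q ↦ ?_)
      (by simp)
    refine ⟨fun h ↦ (adj_two j q).1 h.adj_sub, ?_⟩
    rintro (rfl | rfl)
    exacts [((ringCycle_adj_one_two j).2 hj).symm, (ringCycle_adj_two_succ j).2 hj]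

theorem ringCycle_connected (hk : 3 ≤ k) : (ringCycle S).coe.Connected := by
  have : NeZero k := ⟨by omega⟩
  let v (j : ZMod k) : (ringCycle S).verts := ⟨(j, 0), Or.inl rfl⟩
  have step (j : ZMod k) : (ringCycle S).coe.Reachable (v j) (v (j + 1)) := by
    by_cases hj : j ∈ S
    · exact ((ringCycle_adj_zero_one j).2 hj).coe.reachable.trans <|
        ((ringCycle_adj_one_two j).2 hj).coe.reachable.trans
          ((ringCycle_adj_two_succ j).2 hj).coe.reachable
    · exact ((ringCycle_adj_zero_succ hk j).2 hj).coe.reachable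
  have hv (j : ZMod k) : (ringCycle S).coe.Reachable (v 0) (v j) := by
    rw [← ZMod.natCast_zmod_val j]
    induction j.val with
    | zero => rw [Nat.cast_zero]
    | succ n ih => rw [Nat.cast_succ]; exact ih.trans (step n)
  refine (connected_iff_exists_forall_reachable _).2 ⟨v 0, ?_⟩
  rintro ⟨⟨j, t⟩, hp⟩
  obtain rfl | rfl | rfl := t.eq_zero_or_eq_one_or_eq_two
  · exact hv j
  · have hj : j ∈ S := by simpa [mem_ringCycle_verts] using hp
    exact (hv j).trans ((ringCycle_adj_zero_one j).2 hj).coe.reachable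
  · have hj : j ∈ S := by simpa [mem_ringCycle_verts] using hp
    exact (hv (j + 1)).trans ((ringCycle_adj_two_succ j).2 hj).coe.reachable.symm

theorem ringCycle_isCycleSub (hk : 3 ≤ k) : (ringCycle S).IsCycleSub :=
  ⟨⟨(0, 0), Or.inl rfl⟩, ringCycle_connected hk, fun _ ↦ ncard_ringCycle_neighborSet hk⟩

theorem odd_ncard_ringCycle_verts (hk : Odd k) : Odd (ringCycle S).verts.ncard := by
  have : NeZero k := ⟨hk.pos.ne'⟩
  have hverts : (ringCycle S).verts = Set.univ ×ˢ {0} ∪ S ×ˢ {1, 2} := by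
    ext ⟨j, t⟩
    obtain rfl | rfl | rfl := t.eq_zero_or_eq_one_or_eq_two <;>
      simp [mem_ringCycle_verts]
  rw [hverts, Set.ncard_union_eq (by simp [Set.disjoint_left]), Set.ncard_prod, Set.ncard_prod,
    Set.ncard_univ, Nat.card_zmod, Set.ncard_singleton, Set.ncard_pair (by decide), mul_one]
  exact hk.add_even (even_two.mul_left _)

end ringCycle

theorem ringCycle_injective : Function.Injective (ringCycle (k := k)) := fun S T h ↦
  Set.ext fun j ↦ by
    simpa [mem_ringCycle_verts] using Set.ext_iff.1 (congrArg Subgraph.verts h) (j, 1)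

def fourCycleWalk (hk : 3 ≤ k) (i : ZMod k) : (RGraph k).Walk (i, 0) (i, 0) :=
  .cons (adj_zero_one i) <| .cons (adj_one_two i) <| .cons (adj_two_succ i) <|
    .cons (adj_zero_succ (by omega) i).symm .nil

def fourCycle (hk : 3 ≤ k) (i : ZMod k) : (RGraph k).Subgraph := (fourCycleWalk hk i).toSubgraph

theorem fourCycle_isCycleSub (hk : 3 ≤ k) (i : ZMod k) : (fourCycle hk i).IsCycleSub := by
  refine Walk.IsCycle.isCycleSub_toSubgraph ?_
  simp [fourCycleWalk, Walk.cons_isCycle_iff, Walk.cons_isPath_iff,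
    ZMod.one_ne_zero_of_one_lt (by omega : 1 < k)]

theorem fourCycle_verts (hk : 3 ≤ k) (i : ZMod k) :
    (fourCycle hk i).verts = {(i, 0), (i, 1), (i, 2), (i + 1, 0)} := by
  ext p
  simp only [fourCycle, fourCycleWalk, Walk.verts_toSubgraph, Walk.support_cons, Walk.support_nil,
    List.mem_cons, List.not_mem_nil, or_false, Set.mem_ofPred_eq, Set.mem_insert_iff,
    Set.mem_singleton_iff]
  tauto

theorem ncard_fourCycle_verts (hk : 3 ≤ k) (i : ZMod k) : (fourCycle hk i).verts.ncard = 4 := by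
  rw [fourCycle_verts, Set.ncard_insert_of_notMem, Set.ncard_insert_of_notMem,
    Set.ncard_pair] <;> simp [ZMod.one_ne_zero_of_one_lt (by omega : 1 < k)]

theorem fourCycle_injective (hk : 3 ≤ k) : Function.Injective (fourCycle hk) := fun i j h ↦ by
  simpa [fourCycle_verts] using Set.ext_iff.1 (congrArg Subgraph.verts h) (i, 1)

theorem fourCycle_le (hk : 3 ≤ k) {i : ZMod k} {H : (RGraph k).Subgraph}
    (h01 : H.Adj (i, 0) (i, 1)) (h12 : H.Adj (i, 1) (i, 2)) (h23 : H.Adj (i, 2) (i + 1, 0))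
    (hchord : H.Adj (i, 0) (i + 1, 0)) : fourCycle hk i ≤ H := by
  simp [fourCycle, fourCycleWalk, h01, h12, h23, hchord.symm]

section cycles

variable {H : (RGraph k).Subgraph}

theorem adj_one_iff_of_isCycleSub (hH : H.IsCycleSub) {i : ZMod k} (hi : (i, 1) ∈ H.verts)
    {q : ZMod k × Fin 3} : H.Adj (i, 1) q ↔ (RGraph k).Adj (i, 1) q :=
  hH.adj_iff_of_ncard_neighborSet_eq_two hi <| by
    rw [show (RGraph k).neighborSet (i, 1) = {(i, 0), (i, 2)} from Set.ext (adj_one i),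
      Set.ncard_pair (by simp)]

theorem adj_two_iff_of_isCycleSub (hH : H.IsCycleSub) {i : ZMod k} (hi : (i, 2) ∈ H.verts)
    {q : ZMod k × Fin 3} : H.Adj (i, 2) q ↔ (RGraph k).Adj (i, 2) q :=
  hH.adj_iff_of_ncard_neighborSet_eq_two hi <| by
    rw [show (RGraph k).neighborSet (i, 2) = {(i, 1), (i + 1, 0)} from Set.ext (adj_two i),
      Set.ncard_pair (by simp)]

theorem eq_fourCycle_or_eq_ringCycle (hk : 3 ≤ k) (hH : H.IsCycleSub) :
    (∃ i, H = fourCycle hk i) ∨ ∃ S, H = ringCycle S := by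
  by_cases hchord : ∃ i, (i, 1) ∈ H.verts ∧ H.Adj (i, 0) (i + 1, 0)
  · obtain ⟨i, ha, hc⟩ := hchord
    have h01 : H.Adj (i, 0) (i, 1) :=
      ((adj_one_iff_of_isCycleSub hH ha).2 (adj_zero_one i).symm).symm
    have h12 : H.Adj (i, 1) (i, 2) := (adj_one_iff_of_isCycleSub hH ha).2 (adj_one_two i)
    have h23 : H.Adj (i, 2) (i + 1, 0) :=
      (adj_two_iff_of_isCycleSub hH h12.snd_mem).2 (adj_two_succ i)
    exact Or.inl
      ⟨i, ((fourCycle_isCycleSub hk i).eq_of_le hH (fourCycle_le hk h01 h12 h23 hc)).symm⟩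
  push Not at hchord
  have hverts : H.verts ⊆ (ringCycle {i | (i, 1) ∈ H.verts}).verts := by
    rintro ⟨j, t⟩ hp
    obtain rfl | rfl | rfl := t.eq_zero_or_eq_one_or_eq_two
    · exact Or.inl rfl
    · exact Or.inr hp
    · exact Or.inr ((adj_two_iff_of_isCycleSub hH hp).2 (adj_one_two j).symm).snd_mem
  refine Or.inr ⟨_, hH.eq_of_le (ringCycle_isCycleSub hk) ⟨hverts, fun p q hpq ↦ ?_⟩⟩
  refine ringCycle_adj.2
    ⟨⟨hverts hpq.fst_mem, hverts hpq.snd_mem, hpq.adj_sub⟩, fun i hi he ↦ ?_⟩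
  exact hchord i hi (Subgraph.mem_edgeSet.1 (he ▸ Subgraph.mem_edgeSet.2 hpq))

end cycles

theorem setOf_isCycleSub_odd (hk : 3 ≤ k) (hkodd : Odd k) :
    {H : (RGraph k).Subgraph | H.IsCycleSub ∧ Odd H.verts.ncard} = Set.range ringCycle := by
  ext H
  refine ⟨fun ⟨hH, hodd⟩ ↦ ?_, ?_⟩
  · rcases eq_fourCycle_or_eq_ringCycle hk hH with ⟨i, rfl⟩ | ⟨S, rfl⟩
    · rw [ncard_fourCycle_verts] at hodd
      exact absurd hodd (by decide)
    · exact ⟨S, rfl⟩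
  · rintro ⟨S, rfl⟩
    exact ⟨ringCycle_isCycleSub hk, odd_ncard_ringCycle_verts hkodd⟩

theorem setOf_isCycleSub_even (hk : 3 ≤ k) (hkodd : Odd k) :
    {H : (RGraph k).Subgraph | H.IsCycleSub ∧ Even H.verts.ncard} = Set.range (fourCycle hk) := by
  ext H
  refine ⟨fun ⟨hH, heven⟩ ↦ ?_, ?_⟩
  · rcases eq_fourCycle_or_eq_ringCycle hk hH with ⟨i, rfl⟩ | ⟨S, rfl⟩
    · exact ⟨i, rfl⟩
    · exact absurd (odd_ncard_ringCycle_verts hkodd) (Nat.not_odd_iff_even.2 heven)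
  · rintro ⟨i, rfl⟩
    exact ⟨fourCycle_isCycleSub hk i, by rw [ncard_fourCycle_verts]; decide⟩

end RGraph

theorem cOdd_cEven_RGraph (k : ℕ) (hk : 3 ≤ k) (hkodd : Odd k) :
    cOdd (RGraph k) = 2 ^ k ∧ cEven (RGraph k) = k := by
  have : NeZero k := ⟨by omega⟩
  refine ⟨?_, ?_⟩
  · rw [cOdd, RGraph.setOf_isCycleSub_odd hk hkodd,
      Set.ncard_range_of_injective RGraph.ringCycle_injective, Nat.card_eq_fintype_card,
      Fintype.card_set, ZMod.card]
  · rw [cEven, RGraph.setOf_isCycleSub_even hk hkodd,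
      Set.ncard_range_of_injective (RGraph.fourCycle_injective hk), Nat.card_zmod]
end

section
/- For every integer d ≥ 1, the graph L_d satisfies c_o(L_d) = d and c_e(L_d) = d(d−1)/2 (= binomial(d,2)). -/
/-!
Folding the path at `v_d` turns `L_d` into a ladder whose rails are `v_0 … v_d` and
`v_(2d) … v_d` and whose rungs are the chords `v_i v_(2d-i)`. The lowest vertex `v_m` of a cycle
has no neighbour below it, so the cycle uses the rung at `m`; by degree two it then climbs both
rails until the first rung `j > m` that it uses, or up to the tip `v_d` if there is none, and a
connected 2-regular graph containing this cycle is the cycle. Hence the cycles are indexed by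
`i < j ≤ d`: for `j = d` the cycle has `2(d - i) + 1` vertices, otherwise `2(j - i) + 2`.
-/

open SimpleGraph Filter

/-- The graph `L_d`: a path `v_0 v_1 … v_(2d)` together with the chords `v_i v_(2d-i)`
for `0 ≤ i ≤ d-1`. -/
def LGraph (d : ℕ) : SimpleGraph (Fin (2 * d + 1)) :=
  SimpleGraph.fromRel (fun p q =>
    (q.val = p.val + 1) ∨ (p.val + q.val = 2 * d ∧ p.val < d))

-- `(k : Fin (2 * d + 1))` is the vertex `v_k`; it only occurs for `k ≤ 2 * d` (`val_natCast`).
open Fin.NatCast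

namespace SimpleGraph.Subgraph

section

variable {V : Type*} {G : SimpleGraph V}

theorem verts_subset_of_forall_adj_mem {H : G.Subgraph} (hH : H.coe.Preconnected) {S : Set V}
    {x : V} (hx : x ∈ H.verts) (hxS : x ∈ S) (hS : ∀ ⦃v w⦄, v ∈ S → H.Adj v w → w ∈ S) :
    H.verts ⊆ S := by
  intro v hv
  obtain ⟨p⟩ := hH ⟨x, hx⟩ ⟨v, hv⟩
  suffices ∀ {a b : H.verts}, H.coe.Walk a b → a.1 ∈ S → b.1 ∈ S from this p hxS
  intro a b q
  induction q with
  | nil => exact id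
  | cons h _ ih => exact fun ha => ih (hS ha h)

theorem connected_of_exists_adj_lt {H : G.Subgraph} (f : V → ℕ) {r : V} (hr : r ∈ H.verts)
    (h : ∀ v ∈ H.verts, v ≠ r → ∃ w, H.Adj v w ∧ f w < f v) : H.coe.Connected := by
  have reach : ∀ n, ∀ v (hv : v ∈ H.verts), f v = n → H.coe.Reachable ⟨r, hr⟩ ⟨v, hv⟩ := by
    intro n
    induction n using Nat.strong_induction_on with
    | _ n ih =>
      intro v hv hvn
      by_cases hvr : v = r
      · subst hvr
        rfl
      obtain ⟨w, hvw, hwv⟩ := h v hv hvr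
      exact (ih _ (hvn ▸ hwv) w hvw.snd_mem rfl).trans hvw.coe.symm.reachable
  exact (connected_iff_exists_forall_reachable _).mpr ⟨⟨r, hr⟩, fun ⟨v, hv⟩ => reach _ v hv rfl⟩

/-- As every vertex of `H` has degree two, `H` has no edges at a vertex of `C` besides those of
`C`; connectedness of `H` then leaves no room outside `C`. -/
theorem eq_of_isCycleSub_of_adj_imp {C H : G.Subgraph} (hC : C.IsCycleSub) (hH : H.IsCycleSub)
    (hCH : ∀ ⦃v w⦄, C.Adj v w → H.Adj v w) : C = H := by
  obtain ⟨⟨x, hx⟩, -, hCdeg⟩ := hC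
  obtain ⟨-, hHconn, hHdeg⟩ := hH
  have hCH_verts : C.verts ⊆ H.verts := fun v hv => by
    obtain ⟨w, hw⟩ := Set.nonempty_of_ncard_ne_zero (s := C.neighborSet v) (by simp [hCdeg v hv])
    exact (hCH hw).fst_mem
  have hnbr : ∀ v ∈ C.verts, C.neighborSet v = H.neighborSet v := fun v hv =>
    Set.eq_of_subset_of_ncard_le (fun w hw => hCH hw) (by rw [hCdeg v hv, hHdeg v (hCH_verts hv)])
      (Set.finite_of_ncard_ne_zero (by simp [hHdeg v (hCH_verts hv)]))
  have hHC_verts : H.verts ⊆ C.verts :=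
    verts_subset_of_forall_adj_mem hHconn.preconnected (hCH_verts hx) hx fun v w hv hvw =>
      (show w ∈ C.neighborSet v from hnbr v hv ▸ hvw).snd_mem
  ext v w
  · exact ⟨fun hv => hCH_verts hv, fun hv => hHC_verts hv⟩
  · refine ⟨fun h => hCH h, fun h => ?_⟩
    exact (show w ∈ C.neighborSet v from (hnbr v (hHC_verts h.fst_mem)).symm ▸ h)

end

section

variable {n : ℕ} {G : SimpleGraph (Fin n)} {H : G.Subgraph} {v : Fin n} {a b : ℕ}

theorem ncard_neighborSet_eq_two_of_adj_iff (ha : a < n) (hb : b < n) (hab : a ≠ b)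
    (h : ∀ w, H.Adj v w ↔ (w : ℕ) = a ∨ (w : ℕ) = b) : (H.neighborSet v).ncard = 2 := by
  have : H.neighborSet v = {⟨a, ha⟩, ⟨b, hb⟩} := by
    ext w
    simp [h, Fin.ext_iff]
  rw [this, Set.ncard_pair (by simpa [Fin.ext_iff])]

theorem adj_natCast_of_ncard_neighborSet_eq_two [NeZero n] (hv : (H.neighborSet v).ncard = 2)
    (h : ∀ w, H.Adj v w → (w : ℕ) = a ∨ (w : ℕ) = b) :
    H.Adj v (a : Fin n) ∧ H.Adj v (b : Fin n) := by
  have himage : Fin.val '' H.neighborSet v = {a, b} := by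
    refine Set.eq_of_subset_of_ncard_le (by rintro _ ⟨w, hw, rfl⟩; exact h w hw) ?_ (Set.toFinite _)
    rw [Set.ncard_image_of_injective _ Fin.val_injective, hv]
    exact (Set.ncard_insert_le a {b}).trans (by simp)
  have mem : ∀ c ∈ ({a, b} : Set ℕ), H.Adj v (c : Fin n) := by
    rw [← himage]
    rintro _ ⟨w, hw, rfl⟩
    rwa [Fin.cast_val_eq_self]
  exact ⟨mem a (by simp), mem b (by simp)⟩

end

end SimpleGraph.Subgraph

namespace LGraph

variable {d i j : ℕ} {H : (LGraph d).Subgraph}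

theorem adj_iff {x y : Fin (2 * d + 1)} :
    (LGraph d).Adj x y ↔
      (y : ℕ) = x + 1 ∨ (x : ℕ) = y + 1 ∨ ((x : ℕ) + y = 2 * d ∧ (x : ℕ) ≠ d) := by
  rw [LGraph, fromRel_adj, ne_eq, Fin.ext_iff]
  omega

theorem val_natCast {k : ℕ} (hk : k ≤ 2 * d) : ((k : Fin (2 * d + 1)) : ℕ) = k :=
  Fin.val_cast_of_lt (by omega)

/-- The edges of `cycle d i j`, each listed once with its smaller end first. -/
def CycleEdge (d i j a b : ℕ) : Prop :=
  b = a + 1 ∧ (i ≤ a ∧ b ≤ j ∨ 2 * d - j ≤ a ∧ b ≤ 2 * d - i) ∨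
    a = i ∧ b = 2 * d - i ∨ a = j ∧ b = 2 * d - j ∧ j < d

/-- For `i < j < d`, the even cycle `v_i … v_j v_(2d-j) … v_(2d-i) v_i` through the chords at `i`
and `j`; for `i < j = d`, the odd cycle `v_i … v_(2d-i) v_i` closed by the chord at `i`.
(The guard `i < j` keeps the edges inside `verts` for all arguments.) -/
def cycle (d i j : ℕ) : (LGraph d).Subgraph where
  verts := {x | i ≤ (x : ℕ) ∧ (x : ℕ) ≤ j ∨ 2 * d - j ≤ (x : ℕ) ∧ (x : ℕ) ≤ 2 * d - i}
  Adj x y := (LGraph d).Adj x y ∧ i < j ∧ (CycleEdge d i j x y ∨ CycleEdge d i j y x)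
  adj_sub h := h.1
  edge_vert := by
    rintro x y ⟨-, hij, h⟩
    simp only [CycleEdge] at h
    simp only [Set.mem_ofPred_eq]
    omega
  symm := ⟨fun _ _ h => ⟨h.1.symm, h.2.1, h.2.2.symm⟩⟩

theorem mem_cycle_verts {x : Fin (2 * d + 1)} :
    x ∈ (cycle d i j).verts ↔
      i ≤ (x : ℕ) ∧ (x : ℕ) ≤ j ∨ 2 * d - j ≤ (x : ℕ) ∧ (x : ℕ) ≤ 2 * d - i :=
  Iff.rfl

theorem cycle_adj (hij : i < j) (hjd : j ≤ d) {x y : Fin (2 * d + 1)} :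
    (cycle d i j).Adj x y ↔ CycleEdge d i j x y ∨ CycleEdge d i j y x := by
  refine ⟨fun h => h.2.2, fun h => ⟨adj_iff.mpr ?_, hij, h⟩⟩
  simp only [CycleEdge] at h
  omega

theorem ncard_neighborSet_cycle (hij : i < j) (hjd : j ≤ d) {v : Fin (2 * d + 1)}
    (hv : v ∈ (cycle d i j).verts) : ((cycle d i j).neighborSet v).ncard = 2 := by
  rw [mem_cycle_verts] at hv
  have := v.isLt
  have nbrs : ∀ a b, a ≠ b → a ≤ 2 * d → b ≤ 2 * d →
      (∀ w : ℕ, CycleEdge d i j v w ∨ CycleEdge d i j w v ↔ w = a ∨ w = b) →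
      ((cycle d i j).neighborSet v).ncard = 2 := fun a b hab ha hb h =>
    Subgraph.ncard_neighborSet_eq_two_of_adj_iff (by omega) (by omega) hab
      fun w => (cycle_adj hij hjd).trans (h w)
  simp only [CycleEdge] at nbrs
  rcases (by omega : (v : ℕ) = i ∨ (i < v ∧ (v : ℕ) < j ∨ 2 * d - j < v ∧ (v : ℕ) < 2 * d - i) ∨
      (v : ℕ) = j ∧ j < d ∨ (v : ℕ) = d ∧ j = d ∨ (v : ℕ) = 2 * d - j ∧ j < d ∨
      (v : ℕ) = 2 * d - i) with h | h | h | h | h | h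
  · exact nbrs (i + 1) (2 * d - i) (by omega) (by omega) (by omega) fun w => by omega
  · exact nbrs (v - 1) (v + 1) (by omega) (by omega) (by omega) fun w => by omega
  · exact nbrs (j - 1) (2 * d - j) (by omega) (by omega) (by omega) fun w => by omega
  · exact nbrs (d - 1) (d + 1) (by omega) (by omega) (by omega) fun w => by omega
  · exact nbrs j (2 * d - j + 1) (by omega) (by omega) (by omega) fun w => by omega
  · exact nbrs (2 * d - i - 1) i (by omega) (by omega) (by omega) fun w => by omega

theorem connected_cycle (hij : i < j) (hjd : j ≤ d) : (cycle d i j).coe.Connected := by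
  refine Subgraph.connected_of_exists_adj_lt Fin.val (r := (i : Fin (2 * d + 1)))
    (by rw [mem_cycle_verts, val_natCast (by omega)]; omega) fun v hv hvi => ?_
  rw [mem_cycle_verts] at hv
  have hvi : (v : ℕ) ≠ i := fun h => hvi (by rw [← h, Fin.cast_val_eq_self])
  obtain ⟨w, hw, hwv, hlt⟩ : ∃ w : ℕ, w ≤ 2 * d ∧ CycleEdge d i j w v ∧ w < v := by
    by_cases hv' : (v : ℕ) = 2 * d - j ∧ j < d
    · exact ⟨j, by omega, .inr (.inr ⟨rfl, hv'.1, hv'.2⟩), by omega⟩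
    · exact ⟨v - 1, by omega, .inl ⟨by omega, by omega⟩, by omega⟩
  refine ⟨w, (cycle_adj hij hjd).mpr (.inr ?_), ?_⟩ <;> rw [val_natCast hw] <;> assumption

theorem isCycleSub_cycle (hij : i < j) (hjd : j ≤ d) : (cycle d i j).IsCycleSub :=
  ⟨⟨i, by rw [mem_cycle_verts, val_natCast (by omega)]; omega⟩, connected_cycle hij hjd,
    fun _ => ncard_neighborSet_cycle hij hjd⟩

theorem adj_of_forall_adj_ge {v : Fin (2 * d + 1)} (hv : (H.neighborSet v).ncard = 2)
    (hmin : ∀ w, H.Adj v w → (v : ℕ) ≤ w) :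
    (v : ℕ) < d ∧ H.Adj v (v + 1 : ℕ) ∧ H.Adj v (2 * d - v : ℕ) := by
  obtain ⟨hsucc, hchord⟩ := Subgraph.adj_natCast_of_ncard_neighborSet_eq_two hv
    (a := v + 1) (b := 2 * d - v) fun w hw => by
      have := adj_iff.mp (H.adj_sub hw)
      have := hmin w hw
      omega
  have h₁ := hmin _ hchord
  have h₂ := adj_iff.mp (H.adj_sub hchord)
  rw [val_natCast (k := 2 * d - v) (by omega)] at h₁ h₂
  exact ⟨by omega, hsucc, hchord⟩

theorem adj_of_forall_adj_le {v : Fin (2 * d + 1)} (hv : (H.neighborSet v).ncard = 2)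
    (hmax : ∀ w, H.Adj v w → (w : ℕ) ≤ v) : H.Adj v (v - 1 : ℕ) ∧ H.Adj v (2 * d - v : ℕ) :=
  Subgraph.adj_natCast_of_ncard_neighborSet_eq_two hv fun w hw => by
    have := adj_iff.mp (H.adj_sub hw)
    have := hmax w hw
    omega

/-- The lowest vertex `v_m` of a cycle uses its chord, whose other end is the highest vertex. -/
theorem exists_adj_chord_of_isCycleSub (hH : H.IsCycleSub) :
    ∃ m < d, H.Adj m (m + 1 : ℕ) ∧ H.Adj m (2 * d - m : ℕ) ∧
      H.Adj (2 * d - m - 1 : ℕ) (2 * d - m : ℕ) := by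
  obtain ⟨hne, -, hdeg⟩ := hH
  obtain ⟨x, hx, hmin⟩ := Set.exists_min_image H.verts Fin.val H.verts.toFinite hne
  obtain ⟨y, hy, hmax⟩ := Set.exists_max_image H.verts Fin.val H.verts.toFinite hne
  obtain ⟨hmd, hmrail, hmchord⟩ := adj_of_forall_adj_ge (hdeg x hx) fun w hw => hmin w hw.snd_mem
  obtain ⟨hMrail, hMchord⟩ := adj_of_forall_adj_le (hdeg y hy) fun w hw => hmax w hw.snd_mem
  obtain ⟨m, hm, rfl⟩ : ∃ m ≤ 2 * d, (m : Fin (2 * d + 1)) = x :=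
    ⟨x, by omega, Fin.cast_val_eq_self x⟩
  obtain ⟨M, hM, rfl⟩ : ∃ M ≤ 2 * d, (M : Fin (2 * d + 1)) = y :=
    ⟨y, by omega, Fin.cast_val_eq_self y⟩
  rw [val_natCast hm] at hmd hmrail hmchord hmin
  rw [val_natCast hM] at hMrail hMchord hmax
  obtain rfl : M = 2 * d - m := by
    have h₁ := hmin _ hMchord.snd_mem
    have h₂ := hmax _ hmchord.snd_mem
    rw [val_natCast (k := 2 * d - M) (by omega)] at h₁
    rw [val_natCast (k := 2 * d - m) (by omega)] at h₂
    omega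
  exact ⟨m, hmd, hmrail, hmchord, hMrail.symm⟩

theorem adj_pred_and_adj_succ_of_not_adj_chord {k : ℕ} (hk : k ≤ 2 * d)
    (hv : (H.neighborSet k).ncard = 2) (hchord : ¬ H.Adj k (2 * d - k : ℕ)) :
    H.Adj k (k - 1 : ℕ) ∧ H.Adj k (k + 1 : ℕ) :=
  Subgraph.adj_natCast_of_ncard_neighborSet_eq_two hv fun w hw => by
    have hw' : (w : ℕ) ≠ 2 * d - k := fun h => hchord (by rwa [← h, Fin.cast_val_eq_self])
    have := adj_iff.mp (H.adj_sub hw)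
    rw [val_natCast hk] at this
    omega

theorem adj_succ_of_adj_first_succ (hdeg : ∀ v ∈ H.verts, (H.neighborSet v).ncard = 2)
    {l n : ℕ} (hn : n < 2 * d) (hno : ∀ k, l < k → k ≤ n → ¬ H.Adj k (2 * d - k : ℕ))
    (hl : H.Adj l (l + 1 : ℕ)) {k : ℕ} (hlk : l ≤ k) (hkn : k ≤ n) : H.Adj k (k + 1 : ℕ) := by
  induction k, hlk using Nat.le_induction with
  | base => exact hl
  | succ k hlk ih =>
    have hv := hdeg _ (ih (by omega)).snd_mem
    exact (adj_pred_and_adj_succ_of_not_adj_chord (by omega) hv (hno _ (by omega) hkn)).2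

theorem adj_succ_of_adj_last_succ (hdeg : ∀ v ∈ H.verts, (H.neighborSet v).ncard = 2)
    {l n : ℕ} (hn : n < 2 * d) (hno : ∀ k, l < k → k ≤ n → ¬ H.Adj k (2 * d - k : ℕ))
    (hn' : H.Adj n (n + 1 : ℕ)) {k : ℕ} (hlk : l ≤ k) (hkn : k ≤ n) : H.Adj k (k + 1 : ℕ) := by
  induction hkn using Nat.decreasingInduction with
  | self => exact hn'
  | of_succ k hkn ih =>
    have hv := hdeg _ (ih (by omega)).fst_mem
    have h := (adj_pred_and_adj_succ_of_not_adj_chord (by omega) hv (hno _ (by omega) hkn)).1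
    rw [Nat.add_sub_cancel] at h
    exact h.symm

theorem exists_cycle_eq (hH : H.IsCycleSub) : ∃ i j, i < j ∧ j ≤ d ∧ cycle d i j = H := by
  obtain ⟨m, hmd, hrail, hchord, hrail'⟩ := exists_adj_chord_of_isCycleSub hH
  -- `v_j` is the first vertex above `v_m` at which `H` leaves the path `v_m v_(m+1) …`
  classical
  have hex : ∃ k, m < k ∧ (k = d ∨ H.Adj k (2 * d - k : ℕ)) := ⟨d, hmd, .inl rfl⟩
  obtain ⟨hmj, hj⟩ : m < Nat.find hex ∧ (Nat.find hex = d ∨ H.Adj (Nat.find hex) _) :=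
    Nat.find_spec hex
  set j := Nat.find hex
  have hjd : j ≤ d := Nat.find_min' hex ⟨hmd, .inl rfl⟩
  have hno : ∀ k, m < k → k ≤ j - 1 → ¬ H.Adj k (2 * d - k : ℕ) := fun k h₁ h₂ h =>
    Nat.find_min hex (by omega) ⟨h₁, .inr h⟩
  have hno' : ∀ k, 2 * d - j < k → k ≤ 2 * d - m - 1 → ¬ H.Adj k (2 * d - k : ℕ) :=
    fun k h₁ h₂ h => hno (2 * d - k) (by omega) (by omega)
      (by rw [show 2 * d - (2 * d - k) = k by omega]; exact h.symm)
  have edge : ∀ a b, CycleEdge d m j a b → H.Adj a b := by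
    rintro a b (⟨rfl, h | h⟩ | ⟨rfl, rfl⟩ | ⟨rfl, rfl, h⟩)
    · exact adj_succ_of_adj_first_succ hH.2.2 (by omega) hno hrail h.1 (by omega)
    · refine adj_succ_of_adj_last_succ hH.2.2 (by omega) hno' ?_ h.1 (by omega)
      rwa [show 2 * d - m - 1 + 1 = 2 * d - m by omega]
    · exact hchord
    · exact hj.resolve_left h.ne
  refine ⟨m, j, hmj, hjd, Subgraph.eq_of_isCycleSub_of_adj_imp (isCycleSub_cycle hmj hjd) hH ?_⟩
  intro v w hvw
  rcases (cycle_adj hmj hjd).mp hvw with h | h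
  · simpa using edge v w h
  · simpa using (edge w v h).symm

theorem isCycleSub_iff : H.IsCycleSub ↔ ∃ i j, i < j ∧ j ≤ d ∧ cycle d i j = H :=
  ⟨exists_cycle_eq, fun ⟨_, _, hij, hjd, h⟩ => h ▸ isCycleSub_cycle hij hjd⟩

/-- The two arcs `v_i … v_j` and `v_(2d-j) … v_(2d-i)` overlap only if `j = d`, in `v_d`. -/
theorem ncard_verts_cycle_add (hij : i < j) (hjd : j ≤ d) :
    (cycle d i j).verts.ncard + (j + 1 - (2 * d - j)) = 2 * (j + 1 - i) := by
  have himage : Fin.val '' (cycle d i j).verts =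
      ↑(Finset.Icc i j ∪ Finset.Icc (2 * d - j) (2 * d - i)) := by
    ext k
    simp only [Set.mem_image, mem_cycle_verts, Finset.coe_union, Finset.coe_Icc, Set.mem_union,
      Set.mem_Icc]
    exact ⟨fun ⟨x, hx, hxk⟩ => hxk ▸ hx, fun hk => ⟨⟨k, by omega⟩, hk, rfl⟩⟩
  have hinter :
      Finset.Icc i j ∩ Finset.Icc (2 * d - j) (2 * d - i) = Finset.Icc (2 * d - j) j := by
    ext k
    simp only [Finset.mem_inter, Finset.mem_Icc]
    omega
  have := Finset.card_union_add_card_inter (Finset.Icc i j) (Finset.Icc (2 * d - j) (2 * d - i))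
  rw [hinter, Nat.card_Icc, Nat.card_Icc, Nat.card_Icc] at this
  rw [← Set.ncard_image_of_injective _ Fin.val_injective, himage, Set.ncard_coe_finset]
  omega

theorem odd_ncard_verts_cycle_iff (hij : i < j) (hjd : j ≤ d) :
    Odd (cycle d i j).verts.ncard ↔ j = d := by
  have := ncard_verts_cycle_add hij hjd
  rw [Nat.odd_iff]
  omega

theorem cycle_eq_cycle_iff {i' j' : ℕ} (hij : i < j) (hjd : j ≤ d) (hij' : i' < j')
    (hjd' : j' ≤ d) : cycle d i j = cycle d i' j' ↔ i = i' ∧ j = j' := by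
  refine ⟨fun h => ?_, by rintro ⟨rfl, rfl⟩; rfl⟩
  -- `cycle d i j` meets `v_0, …, v_d` in `v_i, …, v_j`
  have key : ∀ k ≤ d, (i ≤ k ∧ k ≤ j ↔ i' ≤ k ∧ k ≤ j') := fun k hk => by
    have := Set.ext_iff.mp (congrArg Subgraph.verts h) k
    rw [mem_cycle_verts, mem_cycle_verts, val_natCast (by omega)] at this
    omega
  have := key i (by omega)
  have := key j hjd
  have := key i' (by omega)
  have := key j' hjd'
  omega

theorem setOf_isCycleSub_odd :
    {H : (LGraph d).Subgraph | H.IsCycleSub ∧ Odd H.verts.ncard} =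
      (fun i => cycle d i d) '' ↑(Finset.range d) := by
  ext H
  simp only [Set.mem_ofPred_eq, isCycleSub_iff, Set.mem_image, Finset.coe_range, Set.mem_Iio]
  constructor
  · rintro ⟨⟨i, j, hij, hjd, rfl⟩, hodd⟩
    obtain rfl := (odd_ncard_verts_cycle_iff hij hjd).mp hodd
    exact ⟨i, hij, rfl⟩
  · rintro ⟨i, hid, rfl⟩
    exact ⟨⟨i, d, hid, le_rfl, rfl⟩, (odd_ncard_verts_cycle_iff hid le_rfl).mpr rfl⟩

theorem setOf_isCycleSub_even :
    {H : (LGraph d).Subgraph | H.IsCycleSub ∧ Even H.verts.ncard} =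
      (fun p : ℕ × ℕ => cycle d p.1 p.2) ''
        ↑{p ∈ Finset.range d ×ˢ Finset.range d | p.1 < p.2} := by
  ext H
  simp only [Set.mem_ofPred_eq, isCycleSub_iff, Set.mem_image, Finset.coe_filter,
    Finset.mem_product, Finset.mem_range, Prod.exists, ← Nat.not_odd_iff_even]
  constructor
  · rintro ⟨⟨i, j, hij, hjd, rfl⟩, heven⟩
    have hjd : j < d :=
      lt_of_le_of_ne hjd fun h => heven ((odd_ncard_verts_cycle_iff hij hjd).mpr h)
    exact ⟨i, j, ⟨⟨by omega, hjd⟩, hij⟩, rfl⟩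
  · rintro ⟨i, j, ⟨⟨-, hjd⟩, hij⟩, rfl⟩
    exact ⟨⟨i, j, hij, hjd.le, rfl⟩, fun h => hjd.ne ((odd_ncard_verts_cycle_iff hij hjd.le).mp h)⟩

end LGraph

theorem cOdd_cEven_LGraph_general (d : ℕ) :
    cOdd (LGraph d) = d ∧ cEven (LGraph d) = d * (d - 1) / 2 := by
  have inj_odd : Set.InjOn (fun i => LGraph.cycle d i d) ↑(Finset.range d) := fun i hi i' hi' h =>
    ((LGraph.cycle_eq_cycle_iff (Finset.mem_range.mp hi) le_rfl (Finset.mem_range.mp hi')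
      le_rfl).mp h).1
  have inj_even : Set.InjOn (fun p : ℕ × ℕ => LGraph.cycle d p.1 p.2)
      ↑{p ∈ Finset.range d ×ˢ Finset.range d | p.1 < p.2} := by
    rintro ⟨i, j⟩ hij ⟨i', j'⟩ hij' h
    simp only [Finset.coe_filter, Finset.mem_product, Finset.mem_range, Set.mem_ofPred_eq]
      at hij hij'
    exact Prod.ext_iff.mpr ((LGraph.cycle_eq_cycle_iff hij.2 hij.1.2.le hij'.2 hij'.1.2.le).mp h)
  rw [cOdd, cEven, LGraph.setOf_isCycleSub_odd, LGraph.setOf_isCycleSub_even, inj_odd.ncard_image,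
    inj_even.ncard_image, Set.ncard_coe_finset, Set.ncard_coe_finset, Finset.card_range,
    Finset.card_product_filter_lt, Finset.card_range, Nat.choose_two_right]
  exact ⟨rfl, rfl⟩

theorem cOdd_cEven_LGraph (d : ℕ) (hd : 1 ≤ d) :
    cOdd (LGraph d) = d ∧ cEven (LGraph d) = d * (d - 1) / 2 :=
  cOdd_cEven_LGraph_general d
end

section
/- Let G be a finite simple graph, let x and y be adjacent vertices of G with e the edge {x,y}, and let G_1 and G_2 be subgraphs of G whose union is G, whose common vertex set is exactly {x,y}, and whose common edge set is exactly {e}. Then c_e(G) = c_e(G_1) + c_e(G_2) + c_o(G_1,e)·c_o(G_2,e) + c_e(G_1,e)·c_e(G_2,e). -/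
/-!
A cycle of `G` lies in `H₁`, or lies in `H₂` (never both: it has two edges at each vertex, and only
`xy` is common to `H₁` and `H₂`), or uses edges of both. A cycle `C` of the last kind passes through
`x` and `y` but not along `xy`, and its parts `C ⊓ Hᵢ`, closed up by `xy`, are cycles `Dᵢ` of `Hᵢ`
through `xy`; conversely, `D₁ ∪ D₂` without `xy` is such a cycle. Under this bijection
`|C| = |D₁| + |D₂| - 2`, so `C` is even exactly when `D₁` and `D₂` have the same parity.

That `C ⊓ H₂` is a path from `x` to `y` is a parity argument. Away from `x` and `y` it has the same
neighbours as `C`, so a component of it avoiding both would be all of `C`. Hence some component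
contains one of `x`, `y` with degree 1, and by the handshake lemma it contains the other one too.
-/

open SimpleGraph Filter

namespace SimpleGraph

variable {V : Type*} {G : SimpleGraph V} {u v x y : V}

theorem Reachable.mem_of_forall_adj {S : Set V} (h : G.Reachable u v)
    (hS : ∀ a ∈ S, ∀ b, G.Adj a b → b ∈ S) (hu : u ∈ S) : v ∈ S :=
  h.mem_subgraphVerts (H := (⊤ : G.Subgraph).induce S)
    (fun a ha b hab => ⟨ha, hS a ha b hab, hab⟩) hu

theorem exists_ne_reachable_odd_ncard_neighborSet [Finite V]
    (hv : Odd (G.neighborSet v).ncard) :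
    ∃ w ≠ v, G.Reachable v w ∧ Odd (G.neighborSet w).ncard := by
  classical
  have := Fintype.ofFinite V
  -- the handshake lemma, applied to the connected component of `v`
  set B := (G.connectedComponentMk v).toSimpleGraph.spanningCoe
  have hB : ∀ w z, B.Adj w z ↔ G.Reachable v w ∧ G.Adj w z := fun w z => by
    rw [ConnectedComponent.adj_spanningCoe_toSimpleGraph, ConnectedComponent.mem_supp_iff,
      ConnectedComponent.eq, reachable_comm]
  have hdeg : ∀ w, G.Reachable v w → B.degree w = (G.neighborSet w).ncard := fun w hw => by
    rw [← card_neighborSet_eq_degree, Fintype.card_eq_nat_card, Nat.card_coe_set_eq]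
    congr 1
    ext z
    exact (hB w z).trans (and_iff_right hw)
  obtain ⟨w, hwv, hw⟩ := B.exists_ne_odd_degree_of_exists_odd_degree v (by rwa [hdeg v .rfl])
  obtain ⟨z, hz⟩ := B.degree_pos_iff_exists_adj w |>.1 hw.pos
  have hr := ((hB w z).1 hz).1
  exact ⟨w, hwv, hr, by rwa [hdeg w hr] at hw⟩

namespace Subgraph

theorem mem_verts_of_ncard_neighborSet_ne_zero {H : G.Subgraph}
    (h : (H.neighborSet v).ncard ≠ 0) : v ∈ H.verts :=
  H.edge_vert (Set.nonempty_of_ncard_ne_zero h).choose_spec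

theorem Connected.reachable_spanningCoe {H : G.Subgraph} (hH : H.Connected) (hu : u ∈ H.verts)
    (hv : v ∈ H.verts) : H.spanningCoe.Reachable u v :=
  (hH ⟨u, hu⟩ ⟨v, hv⟩).map ⟨Subtype.val, id⟩

theorem Connected.verts_subset_of_forall_adj {H : G.Subgraph} (hH : H.Connected) {S : Set V}
    (hu : u ∈ H.verts) (huS : u ∈ S) (hS : ∀ a ∈ S, ∀ b, H.Adj a b → b ∈ S) : H.verts ⊆ S :=
  fun _ hv => (hH.reachable_spanningCoe hu hv).mem_of_forall_adj hS huS

theorem connected_of_forall_reachable {H : G.Subgraph} (hx : x ∈ H.verts)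
    (h : ∀ v ∈ H.verts, H.spanningCoe.Reachable x v) : H.Connected := by
  rw [Subgraph.connected_iff', connected_iff_exists_forall_reachable]
  refine ⟨⟨x, hx⟩, fun ⟨v, hv⟩ => ?_⟩
  obtain ⟨_, hr⟩ := (h v hv).mem_of_forall_adj
    (S := {w | ∃ hw : w ∈ H.verts, H.coe.Reachable ⟨x, hx⟩ ⟨w, hw⟩})
    (fun a ⟨_, hr⟩ b hab => ⟨H.edge_vert hab.symm, hr.trans (Adj.reachable hab)⟩) ⟨hx, .rfl⟩
  exact hr

theorem Connected.reachable_of_neighborSet_eq {C Q : G.Subgraph} (hC : C.Connected)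
    (hu : u ∈ C.verts)
    (h : ∀ v, Q.spanningCoe.Reachable u v → Q.neighborSet v = C.neighborSet v) :
    ∀ v ∈ C.verts, Q.spanningCoe.Reachable u v := by
  refine fun v hv => hC.verts_subset_of_forall_adj hu (S := {v | Q.spanningCoe.Reachable u v})
    .rfl (fun a ha b hab => ha.trans (Adj.reachable ?_)) hv
  change b ∈ Q.neighborSet a
  rwa [h a ha]

theorem Connected.connected_of_le {C Q : G.Subgraph} (hC : C.Connected) (hQC : Q ≤ C)
    (hQ : ∀ v ∈ Q.verts, v ≠ x → v ≠ y → Q.neighborSet v = C.neighborSet v)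
    (hx : x ∈ Q.verts) (hxy : Q.spanningCoe.Reachable x y) : Q.Connected := by
  refine connected_of_forall_reachable hx fun v hv => ?_
  by_contra hvx
  refine hvx (hC.reachable_of_neighborSet_eq (hQC.1 hv) (fun z hz => ?_) x (hQC.1 hx)).symm
  refine hQ z (hz.mem_of_forall_adj (fun a _ b hab => Q.edge_vert hab.symm) hv) ?_ ?_
  · rintro rfl
    exact hvx hz.symm
  · rintro rfl
    exact hvx (hxy.trans hz.symm)

namespace IsCycleSub

variable {C H : G.Subgraph}

theorem of_connected (hC : C.Connected) (h : ∀ v ∈ C.verts, (C.neighborSet v).ncard = 2) :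
    C.IsCycleSub :=
  ⟨hC.nonempty, hC.coe, h⟩

theorem connected (hC : C.IsCycleSub) : C.Connected := Subgraph.connected_iff'.2 hC.2.1

theorem ncard_neighborSet (hC : C.IsCycleSub) (hv : v ∈ C.verts) :
    (C.neighborSet v).ncard = 2 :=
  hC.2.2 v hv

theorem exists_adj (hC : C.IsCycleSub) (hv : v ∈ C.verts) : ∃ w, C.Adj v w :=
  Set.nonempty_of_ncard_ne_zero (s := C.neighborSet v) (by rw [hC.ncard_neighborSet hv]; norm_num)

theorem ncard_neighborSet_le (hC : C.IsCycleSub) (v : V) : (C.neighborSet v).ncard ≤ 2 := by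
  by_cases hv : v ∈ C.verts
  · exact (hC.ncard_neighborSet hv).le
  · rw [Set.eq_empty_of_forall_notMem (s := C.neighborSet v) fun w hw => hv (C.edge_vert hw),
      Set.ncard_empty]
    norm_num

theorem isCycles_spanningCoe (hC : C.IsCycleSub) : C.spanningCoe.IsCycles :=
  fun _ ⟨_, hw⟩ => hC.ncard_neighborSet (C.edge_vert hw)

theorem le_iff (hC : C.IsCycleSub) : C ≤ H ↔ ∀ ⦃a b⦄, C.Adj a b → H.Adj a b := by
  refine ⟨fun h _ _ hab => h.2 hab, fun h => ⟨fun v hv => ?_, h⟩⟩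
  obtain ⟨w, hw⟩ := hC.exists_adj hv
  exact H.edge_vert (h hw)

theorem exists_adj_not_adj (hC : C.IsCycleSub) (h : ¬C ≤ H) : ∃ a b, C.Adj a b ∧ ¬H.Adj a b := by
  simpa only [hC.le_iff, not_forall, exists_prop] using h

theorem spanningCoe_le_iff (hC : C.IsCycleSub) : C.spanningCoe ≤ H.spanningCoe ↔ C ≤ H :=
  hC.le_iff.symm

theorem connected_deleteEdges [Finite V] (hC : C.IsCycleSub) (hxy : C.Adj x y) :
    (C.deleteEdges {s(x, y)}).Connected := by
  have hx : x ∈ C.verts := C.edge_vert hxy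
  have hxy' : (C.deleteEdges {s(x, y)}).spanningCoe.Reachable x y := by
    rw [← deleteEdges_spanningCoe_eq]
    exact hC.isCycles_spanningCoe.reachable_deleteEdges hxy
  refine connected_of_forall_reachable hx fun v hv => hC.connected.verts_subset_of_forall_adj hx
    (S := {v | (C.deleteEdges {s(x, y)}).spanningCoe.Reachable x v}) .rfl ?_ hv
  intro a ha b hab
  by_cases he : s(a, b) = s(x, y)
  · rcases Sym2.eq_iff.1 he with ⟨rfl, rfl⟩ | ⟨rfl, rfl⟩
    exacts [hxy', .rfl]
  · exact ha.trans (Adj.reachable (G := (C.deleteEdges {s(x, y)}).spanningCoe) ⟨hab, he⟩)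

theorem ncard_neighborSet_eq_one_and_reachable_of_le [Finite V] (hC : C.IsCycleSub)
    {Q : G.Subgraph} (hQC : Q ≤ C)
    (hQ : ∀ v ∈ Q.verts, v ≠ x → v ≠ y → Q.neighborSet v = C.neighborSet v)
    {u w a b : V} (huw : Q.Adj u w) (hab : C.Adj a b) (hab' : ¬Q.Adj a b) :
    (Q.neighborSet x).ncard = 1 ∧ (Q.neighborSet y).ncard = 1 ∧ Q.spanningCoe.Reachable x y := by
  set R := Q.spanningCoe
  have hle : ∀ v, (Q.neighborSet v).ncard ≤ 2 := fun v =>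
    (Set.ncard_le_ncard (neighborSet_subset_of_subgraph hQC v)).trans (hC.ncard_neighborSet_le v)
  have heq : ∀ v, (Q.neighborSet v).ncard = 2 → Q.neighborSet v = C.neighborSet v := fun v hv =>
    Set.eq_of_subset_of_ncard_le (neighborSet_subset_of_subgraph hQC v)
      (by rw [hv]; exact hC.ncard_neighborSet_le v)
  have hodd : ∀ z, Odd (Q.neighborSet z).ncard →
      (z = x ∨ z = y) ∧ (Q.neighborSet z).ncard = 1 := by
    intro z hz
    have hzQ := mem_verts_of_ncard_neighborSet_ne_zero (by grind : (Q.neighborSet z).ncard ≠ 0)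
    refine ⟨?_, by grind [hle z]⟩
    by_contra! hxy
    rw [hQ z hzQ hxy.1 hxy.2, hC.ncard_neighborSet (hQC.1 hzQ)] at hz
    exact Nat.not_odd_iff_even.2 even_two hz
  -- if all degrees in the component of `u` were 2, it would be closed in `C` and contain `ab`
  obtain ⟨t, hut, ht⟩ : ∃ t, R.Reachable u t ∧ (Q.neighborSet t).ncard ≠ 2 := by
    by_contra! h
    have ha := hC.connected.reachable_of_neighborSet_eq (hQC.1 (Q.edge_vert huw))
      (fun v hv => heq v (h v hv)) a (C.edge_vert hab)
    exact hab' (show b ∈ Q.neighborSet a by rw [heq a (h a ha)]; exact hab)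
  obtain ⟨z, hz⟩ := hut.mem_of_forall_adj (S := {v | ∃ z, R.Adj v z})
    (fun a _ b hab => ⟨a, hab.symm⟩) ⟨w, huw⟩
  have ht1 : Odd (Q.neighborSet t).ncard := by
    have := Set.ncard_pos (s := Q.neighborSet t) |>.2 ⟨z, hz⟩
    grind [hle t]
  obtain ⟨t', htt', hr, ht'⟩ := exists_ne_reachable_odd_ncard_neighborSet (G := R) ht1
  obtain ⟨rfl | rfl, h⟩ := hodd t ht1 <;> obtain ⟨rfl | rfl, h'⟩ := hodd t' ht'
  exacts [absurd rfl htt', ⟨h, h', hr⟩, ⟨h', h, hr.symm⟩, absurd rfl htt']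

end IsCycleSub

def ofLE {G' : SimpleGraph V} (h : G' ≤ G) (D : G'.Subgraph) : G.Subgraph where
  verts := D.verts
  Adj := D.Adj
  adj_sub hab := h (D.adj_sub hab)
  edge_vert := D.edge_vert
  symm := D.symm

theorem ofLE_injective {G' : SimpleGraph V} (h : G' ≤ G) : Function.Injective (ofLE h) :=
  fun _ _ hD => Subgraph.ext (congrArg (·.verts) hD) (congrArg (·.Adj) hD)

theorem ncard_setOf_ofLE {G' : SimpleGraph V} (h : G' ≤ G) (P : G.Subgraph → Prop) :
    {D : G'.Subgraph | P (ofLE h D)}.ncard = {K : G.Subgraph | P K ∧ K.spanningCoe ≤ G'}.ncard := by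
  rw [← (ofLE_injective h).injOn.ncard_image]
  congr 1
  ext K
  constructor
  · rintro ⟨D, hD, rfl⟩
    exact ⟨hD, fun _ _ => D.adj_sub⟩
  · rintro ⟨hK, hle⟩
    exact ⟨⟨K.verts, K.Adj, fun hab => hle hab, K.edge_vert, K.symm⟩, hK, rfl⟩

theorem ncard_setOf_ofLE_spanningCoe (H : G.Subgraph) {P : G.Subgraph → Prop}
    (hP : ∀ C, P C → C.IsCycleSub) :
    {D : H.spanningCoe.Subgraph | P (ofLE H.spanningCoe_le D)}.ncard = {C | P C ∧ C ≤ H}.ncard := by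
  rw [ncard_setOf_ofLE]
  congr 1
  ext C
  exact and_congr_right fun hC => (hP C hC).spanningCoe_le_iff

def glue (x y : V) (D₁ D₂ : G.Subgraph) : G.Subgraph :=
  D₁.deleteEdges {s(x, y)} ⊔ D₂.deleteEdges {s(x, y)}

theorem glue_comm (D₁ D₂ : G.Subgraph) : glue x y D₁ D₂ = glue x y D₂ D₁ := sup_comm _ _

def cyclesThrough (H : G.Subgraph) (x y : V) : Set G.Subgraph :=
  {C | C.IsCycleSub ∧ C.Adj x y ∧ C ≤ H}

structure IsEdgeGluing (H₁ H₂ : G.Subgraph) (x y : V) : Prop where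
  sup_eq_top : H₁ ⊔ H₂ = ⊤
  verts_inter : H₁.verts ∩ H₂.verts = {x, y}
  edgeSet_inter : H₁.edgeSet ∩ H₂.edgeSet = {s(x, y)}

namespace IsEdgeGluing

variable {H₁ H₂ C D₁ D₂ : G.Subgraph} {a b : V}

theorem symm (hG : IsEdgeGluing H₁ H₂ x y) : IsEdgeGluing H₂ H₁ x y :=
  ⟨by rw [sup_comm, hG.sup_eq_top], by rw [Set.inter_comm, hG.verts_inter],
    by rw [Set.inter_comm, hG.edgeSet_inter]⟩

theorem adj_left (hG : IsEdgeGluing H₁ H₂ x y) : H₁.Adj x y :=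
  (show s(x, y) ∈ H₁.edgeSet ∩ H₂.edgeSet by rw [hG.edgeSet_inter]; rfl).1

theorem adj_right (hG : IsEdgeGluing H₁ H₂ x y) : H₂.Adj x y := hG.symm.adj_left

theorem adj (hG : IsEdgeGluing H₁ H₂ x y) : G.Adj x y := hG.adj_left.adj_sub

theorem adj_or (hG : IsEdgeGluing H₁ H₂ x y) (hab : G.Adj a b) : H₁.Adj a b ∨ H₂.Adj a b := by
  rw [← sup_adj, hG.sup_eq_top]
  exact hab

theorem eq_of_adj_of_adj (hG : IsEdgeGluing H₁ H₂ x y) (h₁ : H₁.Adj a b) (h₂ : H₂.Adj a b) :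
    s(a, b) = s(x, y) := by
  have : s(a, b) ∈ H₁.edgeSet ∩ H₂.edgeSet := ⟨h₁, h₂⟩
  rwa [hG.edgeSet_inter] at this

theorem eq_or_eq_of_mem (hG : IsEdgeGluing H₁ H₂ x y) (h₁ : v ∈ H₁.verts) (h₂ : v ∈ H₂.verts) :
    v = x ∨ v = y := by
  have : v ∈ H₁.verts ∩ H₂.verts := ⟨h₁, h₂⟩
  rwa [hG.verts_inter] at this

theorem neighborSet_inf_of_mem (hG : IsEdgeGluing H₁ H₂ x y) (C : G.Subgraph)
    (hv : v ∈ H₂.verts) (hvx : v ≠ x) (hvy : v ≠ y) : (C ⊓ H₂).neighborSet v = C.neighborSet v := by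
  refine Set.Subset.antisymm (fun w hw => hw.1) fun w hw =>
    ⟨hw, (hG.adj_or (C.adj_sub hw)).resolve_left fun h => ?_⟩
  rcases hG.eq_or_eq_of_mem (H₁.edge_vert h) hv with rfl | rfl <;> contradiction

theorem not_le_of_le (hG : IsEdgeGluing H₁ H₂ x y) (hC : C.IsCycleSub) (h₁ : C ≤ H₁) :
    ¬C ≤ H₂ := by
  intro h₂
  obtain ⟨v, hv⟩ := hC.1
  obtain ⟨p, hp⟩ := hC.exists_adj hv
  obtain ⟨q, hq, hqp⟩ := Set.exists_ne_of_one_lt_ncard (s := C.neighborSet v)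
    (by rw [hC.ncard_neighborSet hv]; norm_num) p
  exact hqp (Sym2.congr_right.1 ((hG.eq_of_adj_of_adj (h₁.2 hq) (h₂.2 hq)).trans
    (hG.eq_of_adj_of_adj (h₁.2 hp) (h₂.2 hp)).symm))

section Mixed

variable [Finite V]

theorem ncard_neighborSet_inf_eq_one_and_connected (hG : IsEdgeGluing H₁ H₂ x y)
    (hC : C.IsCycleSub) (h₁ : ¬C ≤ H₁) (h₂ : ¬C ≤ H₂) :
    ((C ⊓ H₂).neighborSet x).ncard = 1 ∧ ((C ⊓ H₂).neighborSet y).ncard = 1 ∧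
      (C ⊓ H₂).Connected := by
  have hQ : ∀ v ∈ (C ⊓ H₂).verts, v ≠ x → v ≠ y → (C ⊓ H₂).neighborSet v = C.neighborSet v :=
    fun v hv => hG.neighborSet_inf_of_mem C hv.2
  obtain ⟨u, w, huw, huw₁⟩ := hC.exists_adj_not_adj h₁
  obtain ⟨a, b, hab, hab₂⟩ := hC.exists_adj_not_adj h₂
  obtain ⟨hx, hy, hxy⟩ := hC.ncard_neighborSet_eq_one_and_reachable_of_le inf_le_left hQ
    ⟨huw, (hG.adj_or (C.adj_sub huw)).resolve_left huw₁⟩ hab fun h => hab₂ h.2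
  exact ⟨hx, hy, hC.connected.connected_of_le inf_le_left hQ
    (mem_verts_of_ncard_neighborSet_ne_zero (by omega)) hxy⟩

theorem not_adj_of_not_le (hG : IsEdgeGluing H₁ H₂ x y) (hC : C.IsCycleSub) (h₁ : ¬C ≤ H₁)
    (h₂ : ¬C ≤ H₂) : ¬C.Adj x y := by
  intro hxy
  have hunion : (C ⊓ H₁).neighborSet x ∪ (C ⊓ H₂).neighborSet x = C.neighborSet x := by
    rw [← neighborSet_sup, ← inf_sup_left, hG.sup_eq_top, inf_top_eq]
  have hcard := Set.ncard_union_add_ncard_inter ((C ⊓ H₁).neighborSet x) ((C ⊓ H₂).neighborSet x)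
  rw [hunion, hC.ncard_neighborSet (C.edge_vert hxy),
    (hG.symm.ncard_neighborSet_inf_eq_one_and_connected hC h₂ h₁).1,
    (hG.ncard_neighborSet_inf_eq_one_and_connected hC h₁ h₂).1] at hcard
  have hempty : (C ⊓ H₁).neighborSet x ∩ (C ⊓ H₂).neighborSet x = ∅ :=
    (Set.ncard_eq_zero (Set.toFinite _)).1 (by omega)
  exact hempty.subset ⟨⟨hxy, hG.adj_left⟩, ⟨hxy, hG.adj_right⟩⟩

theorem mem_verts_of_not_le (hG : IsEdgeGluing H₁ H₂ x y) (hC : C.IsCycleSub) (h₁ : ¬C ≤ H₁)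
    (h₂ : ¬C ≤ H₂) : x ∈ C.verts ∧ y ∈ C.verts := by
  obtain ⟨hx, hy, -⟩ := hG.ncard_neighborSet_inf_eq_one_and_connected hC h₁ h₂
  exact ⟨(mem_verts_of_ncard_neighborSet_ne_zero (H := C ⊓ H₂) (by omega)).1,
    (mem_verts_of_ncard_neighborSet_ne_zero (H := C ⊓ H₂) (by omega)).1⟩

theorem verts_inf_sup (hG : IsEdgeGluing H₁ H₂ x y) (hC : C.IsCycleSub) (h₁ : ¬C ≤ H₁)
    (h₂ : ¬C ≤ H₂) : (C ⊓ H₂ ⊔ G.subgraphOfAdj hG.adj).verts = C.verts ∩ H₂.verts := by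
  have hx := hG.mem_verts_of_not_le hC h₁ h₂
  have hxy := hG.adj_right
  rw [verts_sup, verts_inf, subgraphOfAdj_verts, Set.union_eq_left, Set.pair_subset_iff]
  exact ⟨⟨hx.1, H₂.edge_vert hxy⟩, ⟨hx.2, H₂.edge_vert hxy.symm⟩⟩

theorem ncard_verts_inf_sup_add (hG : IsEdgeGluing H₁ H₂ x y) (hC : C.IsCycleSub)
    (h₁ : ¬C ≤ H₁) (h₂ : ¬C ≤ H₂) :
    (C ⊓ H₁ ⊔ G.subgraphOfAdj hG.adj).verts.ncard + (C ⊓ H₂ ⊔ G.subgraphOfAdj hG.adj).verts.ncard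
      = C.verts.ncard + 2 := by
  have hunion : H₁.verts ∪ H₂.verts = Set.univ := by
    rw [← verts_sup, hG.sup_eq_top, verts_top]
  have hx := hG.mem_verts_of_not_le hC h₁ h₂
  rw [hG.symm.verts_inf_sup hC h₂ h₁, hG.verts_inf_sup hC h₁ h₂,
    ← Set.ncard_union_add_ncard_inter, ← Set.inter_union_distrib_left, hunion, Set.inter_univ,
    ← Set.inter_inter_distrib_left, hG.verts_inter,
    Set.inter_eq_right.2 (Set.pair_subset hx.1 hx.2),
    Set.ncard_pair hG.adj.ne]

theorem isCycleSub_inf_sup (hG : IsEdgeGluing H₁ H₂ x y) (hC : C.IsCycleSub) (h₁ : ¬C ≤ H₁)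
    (h₂ : ¬C ≤ H₂) : (C ⊓ H₂ ⊔ G.subgraphOfAdj hG.adj).IsCycleSub := by
  obtain ⟨hx, hy, hconn⟩ := hG.ncard_neighborSet_inf_eq_one_and_connected hC h₁ h₂
  have hxy := hG.not_adj_of_not_le hC h₁ h₂
  have hmem := hG.mem_verts_of_not_le hC h₁ h₂
  have hxQ : x ∈ (C ⊓ H₂).verts := ⟨hmem.1, H₂.edge_vert hG.adj_right⟩
  refine .of_connected (connected_sup hconn.preconnected
    (subgraphOfAdj_connected hG.adj).preconnected ⟨x, hxQ, by simp⟩) fun v hv => ?_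
  rw [neighborSet_sup]
  rcases eq_or_ne v x with rfl | hvx
  · rw [neighborSet_fst_subgraphOfAdj, Set.union_singleton,
      Set.ncard_insert_of_notMem fun h => hxy h.1, hx]
  rcases eq_or_ne v y with rfl | hvy
  · rw [neighborSet_snd_subgraphOfAdj, Set.union_singleton,
      Set.ncard_insert_of_notMem fun h => hxy h.1.symm, hy]
  rw [hG.verts_inf_sup hC h₁ h₂] at hv
  have hnone : (G.subgraphOfAdj hG.adj).neighborSet v = ∅ :=
    Set.eq_empty_of_forall_notMem fun w hw => by
      rcases (G.subgraphOfAdj hG.adj).edge_vert hw with h | h <;> contradiction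
  rw [hnone, Set.union_empty, hG.neighborSet_inf_of_mem C hv.2 hvx hvy,
    hC.ncard_neighborSet hv.1]

end Mixed

theorem neighborSet_glue_of_mem (hG : IsEdgeGluing H₁ H₂ x y) (h₁ : D₁ ≤ H₁) (h₂ : D₂ ≤ H₂)
    (hv : v ∈ D₁.verts) (hvx : v ≠ x) (hvy : v ≠ y) :
    (glue x y D₁ D₂).neighborSet v = D₁.neighborSet v := by
  have hv₂ : v ∉ D₂.verts := fun h => by
    rcases hG.eq_or_eq_of_mem (h₁.1 hv) (h₂.1 h) with rfl | rfl <;> contradiction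
  have hne : ∀ w, s(v, w) ∉ ({s(x, y)} : Set (Sym2 V)) := fun w h => by
    rcases Sym2.mem_iff.1 ((Set.mem_singleton_iff.1 h) ▸ Sym2.mem_mk_left v w) with rfl | rfl <;>
      contradiction
  ext w
  simp only [glue, neighborSet_sup, Set.mem_union, mem_neighborSet, deleteEdges_adj, hne,
    not_false_eq_true, and_true, or_iff_left_iff_imp]
  exact fun h => absurd (D₂.edge_vert h) hv₂

theorem isCycleSub_glue [Finite V] (hG : IsEdgeGluing H₁ H₂ x y) (hD₁ : D₁.IsCycleSub)
    (hD₂ : D₂.IsCycleSub) (h₁ : D₁ ≤ H₁) (h₂ : D₂ ≤ H₂) (hxy₁ : D₁.Adj x y) (hxy₂ : D₂.Adj x y) :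
    (glue x y D₁ D₂).IsCycleSub := by
  have hend : ∀ v z, s(v, z) = s(x, y) → ((glue x y D₁ D₂).neighborSet v).ncard = 2 := by
    intro v z hz
    have hdel : ∀ D : G.Subgraph, D.Adj x y →
        ((D.deleteEdges {s(x, y)}).neighborSet v).ncard = (D.neighborSet v).ncard - 1 := by
      intro D hD
      rw [← Set.ncard_sdiff_singleton_of_mem (s := D.neighborSet v) ((adj_congr_of_sym2 hz).2 hD)]
      congr 1
      ext w
      simp only [mem_neighborSet, deleteEdges_adj, Set.mem_singleton_iff, Set.mem_sdiff, ← hz,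
        Sym2.congr_right]
    have hv : ∀ D : G.Subgraph, D.Adj x y → v ∈ D.verts := fun D hD => by
      rcases Sym2.mem_iff.1 (hz ▸ Sym2.mem_mk_left v z) with rfl | rfl
      exacts [D.edge_vert hD, D.edge_vert hD.symm]
    rw [glue, neighborSet_sup, Set.ncard_union_eq, hdel D₁ hxy₁, hdel D₂ hxy₂,
      hD₁.ncard_neighborSet (hv D₁ hxy₁), hD₂.ncard_neighborSet (hv D₂ hxy₂)]
    exact Set.disjoint_left.2 fun w hw₁ hw₂ => hw₁.2 (hG.eq_of_adj_of_adj (h₁.2 hw₁.1) (h₂.2 hw₂.1))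
  refine .of_connected (connected_sup (hD₁.connected_deleteEdges hxy₁).preconnected
    (hD₂.connected_deleteEdges hxy₂).preconnected ⟨x, D₁.edge_vert hxy₁, D₂.edge_vert hxy₂⟩)
    fun v hv => ?_
  rcases eq_or_ne v x with rfl | hvx
  · exact hend v y rfl
  rcases eq_or_ne v y with rfl | hvy
  · exact hend v x Sym2.eq_swap
  rcases hv with hv | hv
  · rw [hG.neighborSet_glue_of_mem h₁ h₂ hv hvx hvy, hD₁.ncard_neighborSet hv]
  · rw [glue_comm, hG.symm.neighborSet_glue_of_mem h₂ h₁ hv hvx hvy, hD₂.ncard_neighborSet hv]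

theorem not_glue_le (hG : IsEdgeGluing H₁ H₂ x y) (hD₂ : D₂.IsCycleSub) (h₂ : D₂ ≤ H₂)
    (hxy₂ : D₂.Adj x y) : ¬glue x y D₁ D₂ ≤ H₁ := by
  intro hle
  obtain ⟨w, hw, hwy⟩ := Set.exists_ne_of_one_lt_ncard (s := D₂.neighborSet x)
    (by rw [hD₂.ncard_neighborSet (D₂.edge_vert hxy₂)]; norm_num) y
  have hne : s(x, w) ≠ s(x, y) := fun h => hwy (Sym2.congr_right.1 h)
  exact hne (hG.eq_of_adj_of_adj (hle.2 (Or.inr ⟨hw, hne⟩)) (h₂.2 hw))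

theorem glue_inf_sup [Finite V] (hG : IsEdgeGluing H₁ H₂ x y) (hC : C.IsCycleSub)
    (h₁ : ¬C ≤ H₁) (h₂ : ¬C ≤ H₂) :
    glue x y (C ⊓ H₁ ⊔ G.subgraphOfAdj hG.adj) (C ⊓ H₂ ⊔ G.subgraphOfAdj hG.adj) = C := by
  have hxy := hG.not_adj_of_not_le hC h₁ h₂
  ext v w
  · rw [glue, verts_sup, deleteEdges_verts, deleteEdges_verts, hG.symm.verts_inf_sup hC h₂ h₁,
      hG.verts_inf_sup hC h₁ h₂, ← Set.inter_union_distrib_left, ← verts_sup, hG.sup_eq_top,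
      verts_top, Set.inter_univ]
  · simp only [glue, sup_adj, deleteEdges_adj, inf_adj, subgraphOfAdj_adj, Set.mem_singleton_iff]
    constructor
    · rintro (⟨h | h, hne⟩ | ⟨h | h, hne⟩)
      exacts [h.1, absurd h.symm hne, h.1, absurd h.symm hne]
    · intro h
      have hne : s(v, w) ≠ s(x, y) := fun he => hxy ((adj_congr_of_sym2 he).1 h)
      rcases hG.adj_or (C.adj_sub h) with h' | h'
      exacts [Or.inl ⟨Or.inl ⟨h, h'⟩, hne⟩, Or.inr ⟨Or.inl ⟨h, h'⟩, hne⟩]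

theorem inf_sup_glue (hG : IsEdgeGluing H₁ H₂ x y) (h₁ : D₁ ≤ H₁) (h₂ : D₂ ≤ H₂)
    (hxy₁ : D₁.Adj x y) :
    glue x y D₁ D₂ ⊓ H₁ ⊔ G.subgraphOfAdj hG.adj = D₁ := by
  ext v w
  · simp only [glue, verts_sup, verts_inf, deleteEdges_verts, subgraphOfAdj_verts, Set.mem_union,
      Set.mem_inter_iff, Set.mem_insert_iff, Set.mem_singleton_iff]
    constructor
    · rintro (⟨hv | hv, hv₁⟩ | rfl | rfl)
      · exact hv
      · rcases hG.eq_or_eq_of_mem hv₁ (h₂.1 hv) with rfl | rfl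
        exacts [D₁.edge_vert hxy₁, D₁.edge_vert hxy₁.symm]
      exacts [D₁.edge_vert hxy₁, D₁.edge_vert hxy₁.symm]
    · exact fun hv => Or.inl ⟨Or.inl hv, h₁.1 hv⟩
  · simp only [glue, sup_adj, deleteEdges_adj, inf_adj, subgraphOfAdj_adj, Set.mem_singleton_iff]
    constructor
    · rintro (⟨⟨h, -⟩ | ⟨h, hne⟩, h'⟩ | h)
      · exact h
      · exact absurd (hG.eq_of_adj_of_adj h' (h₂.2 h)) hne
      · exact (adj_congr_of_sym2 h.symm).2 hxy₁
    · intro h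
      by_cases he : s(x, y) = s(v, w)
      · exact Or.inr he
      · exact Or.inl ⟨Or.inl ⟨h, Ne.symm he⟩, h₁.2 h⟩

theorem ncard_setOf_eq_add [Finite V] (hG : IsEdgeGluing H₁ H₂ x y) {P : G.Subgraph → Prop}
    (hP : ∀ C, P C → C.IsCycleSub) :
    {C | P C}.ncard = {C | P C ∧ C ≤ H₁}.ncard + {C | P C ∧ C ≤ H₂}.ncard +
      {C | P C ∧ ¬C ≤ H₁ ∧ ¬C ≤ H₂}.ncard := by
  have hdisj : Disjoint {C | P C ∧ C ≤ H₁} {C | P C ∧ C ≤ H₂} :=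
    Set.disjoint_left.2 fun C h₁ h₂ => hG.not_le_of_le (hP C h₁.1) h₁.2 h₂.2
  rw [← Set.ncard_union_eq hdisj, ← Set.ncard_union_eq]
  · congr 1
    ext C
    simp only [Set.mem_union, Set.mem_ofPred_eq]
    tauto
  · exact Set.disjoint_left.2 fun C h h' => by
      rcases h with h | h
      exacts [h'.2.1 h.2, h'.2.2 h.2]

theorem ncard_mixed_even_cycles [Finite V] (hG : IsEdgeGluing H₁ H₂ x y) :
    {C | (C.IsCycleSub ∧ Even C.verts.ncard) ∧ ¬C ≤ H₁ ∧ ¬C ≤ H₂}.ncard =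
      {D ∈ cyclesThrough H₁ x y ×ˢ cyclesThrough H₂ x y |
        Even (D.1.verts.ncard + D.2.verts.ncard)}.ncard := by
  set split := fun C : G.Subgraph =>
    (C ⊓ H₁ ⊔ G.subgraphOfAdj hG.adj, C ⊓ H₂ ⊔ G.subgraphOfAdj hG.adj)
  have split_glue : ∀ D ∈ cyclesThrough H₁ x y ×ˢ cyclesThrough H₂ x y,
      split (glue x y D.1 D.2) = D := by
    rintro ⟨D₁, D₂⟩ ⟨⟨-, hxy₁, h₁⟩, ⟨-, hxy₂, h₂⟩⟩
    refine Prod.ext (hG.inf_sup_glue h₁ h₂ hxy₁) ?_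
    change glue x y D₁ D₂ ⊓ H₂ ⊔ G.subgraphOfAdj hG.adj = D₂
    rw [glue_comm]
    exact hG.symm.inf_sup_glue h₂ h₁ hxy₂
  refine Set.BijOn.ncard_eq (f := split) <| Set.InvOn.bijOn (f' := fun D => glue x y D.1 D.2)
    ⟨fun C ⟨⟨hC, _⟩, h₁, h₂⟩ => hG.glue_inf_sup hC h₁ h₂, fun D hD => split_glue D hD.1⟩ ?_ ?_
  · rintro C ⟨⟨hC, heven⟩, h₁, h₂⟩
    refine ⟨⟨⟨hG.symm.isCycleSub_inf_sup hC h₂ h₁, Or.inr rfl,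
      sup_le inf_le_right (subgraphOfAdj_le_of_adj H₁ hG.adj_left)⟩,
      ⟨hG.isCycleSub_inf_sup hC h₁ h₂, Or.inr rfl,
        sup_le inf_le_right (subgraphOfAdj_le_of_adj H₂ hG.adj_right)⟩⟩, ?_⟩
    rw [hG.ncard_verts_inf_sup_add hC h₁ h₂]
    exact heven.add even_two
  · rintro ⟨D₁, D₂⟩ ⟨hD, heven⟩
    obtain ⟨⟨hD₁, hxy₁, h₁⟩, ⟨hD₂, hxy₂, h₂⟩⟩ := id hD
    have hK₁ : ¬glue x y D₁ D₂ ≤ H₁ := hG.not_glue_le hD₂ h₂ hxy₂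
    have hK₂ : ¬glue x y D₁ D₂ ≤ H₂ := glue_comm D₂ D₁ ▸ hG.symm.not_glue_le hD₁ h₁ hxy₁
    have hK := hG.isCycleSub_glue hD₁ hD₂ h₁ h₂ hxy₁ hxy₂
    refine ⟨⟨hK, ?_⟩, hK₁, hK₂⟩
    have hsum : (split (glue x y D₁ D₂)).1.verts.ncard + (split (glue x y D₁ D₂)).2.verts.ncard =
        (glue x y D₁ D₂).verts.ncard + 2 := hG.ncard_verts_inf_sup_add hK hK₁ hK₂
    rw [split_glue _ hD] at hsum
    exact (Nat.even_add.1 (hsum ▸ heven)).2 even_two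

end IsEdgeGluing

end Subgraph
end SimpleGraph

theorem Set.ncard_sep_prod_even_add {α β : Type*} [Finite α] [Finite β] (s : Set α) (t : Set β)
    (f : α → ℕ) (g : β → ℕ) :
    {p ∈ s ×ˢ t | Even (f p.1 + g p.2)}.ncard =
      {a ∈ s | Odd (f a)}.ncard * {b ∈ t | Odd (g b)}.ncard +
        {a ∈ s | Even (f a)}.ncard * {b ∈ t | Even (g b)}.ncard := by
  have hdisj : Disjoint ({a ∈ s | Odd (f a)} ×ˢ {b ∈ t | Odd (g b)})
      ({a ∈ s | Even (f a)} ×ˢ {b ∈ t | Even (g b)}) :=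
    Set.disjoint_left.2 fun p hodd heven => Nat.not_even_iff_odd.2 hodd.1.2 heven.1.2
  rw [← Set.ncard_prod, ← Set.ncard_prod, ← Set.ncard_union_eq hdisj]
  congr 1
  ext ⟨a, b⟩
  simp only [Set.mem_ofPred_eq, Set.mem_prod, Set.mem_union, Nat.even_add, ← Nat.not_even_iff_odd]
  tauto

section

open Subgraph

variable {V : Type*} {G : SimpleGraph V}

theorem cEven_spanningCoe (H : G.Subgraph) :
    cEven H.spanningCoe = {C : G.Subgraph | (C.IsCycleSub ∧ Even C.verts.ncard) ∧ C ≤ H}.ncard :=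
  ncard_setOf_ofLE_spanningCoe H (P := fun C => C.IsCycleSub ∧ Even C.verts.ncard) fun _ h => h.1

theorem cOddE_spanningCoe (H : G.Subgraph) (x y : V) :
    cOddE H.spanningCoe x y = {C ∈ H.cyclesThrough x y | Odd C.verts.ncard}.ncard := by
  refine (ncard_setOf_ofLE_spanningCoe H
    (P := fun C => C.IsCycleSub ∧ Odd C.verts.ncard ∧ C.Adj x y) fun _ h => h.1).trans ?_
  congr 1
  ext C
  simp only [cyclesThrough, Set.mem_ofPred_eq]
  tauto

theorem cEvenE_spanningCoe (H : G.Subgraph) (x y : V) :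
    cEvenE H.spanningCoe x y = {C ∈ H.cyclesThrough x y | Even C.verts.ncard}.ncard := by
  refine (ncard_setOf_ofLE_spanningCoe H
    (P := fun C => C.IsCycleSub ∧ Even C.verts.ncard ∧ C.Adj x y) fun _ h => h.1).trans ?_
  congr 1
  ext C
  simp only [cyclesThrough, Set.mem_ofPred_eq]
  tauto

end

theorem cEven_glue_general {V : Type*} [Fintype V] (G : SimpleGraph V) (x y : V)
    (H₁ H₂ : G.Subgraph) (hunion : H₁ ⊔ H₂ = ⊤)
    (hverts : H₁.verts ∩ H₂.verts = {x, y})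
    (hedges : H₁.edgeSet ∩ H₂.edgeSet = {s(x, y)}) :
    cEven G = cEven H₁.spanningCoe + cEven H₂.spanningCoe +
      cOddE H₁.spanningCoe x y * cOddE H₂.spanningCoe x y +
      cEvenE H₁.spanningCoe x y * cEvenE H₂.spanningCoe x y := by
  have hG : H₁.IsEdgeGluing H₂ x y := ⟨hunion, hverts, hedges⟩
  rw [cEven_spanningCoe, cEven_spanningCoe, cOddE_spanningCoe, cOddE_spanningCoe,
    cEvenE_spanningCoe, cEvenE_spanningCoe, add_assoc _ (_ * _), ← Set.ncard_sep_prod_even_add,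
    ← hG.ncard_mixed_even_cycles]
  exact hG.ncard_setOf_eq_add fun _ h => h.1

theorem cEven_glue {V : Type*} [Fintype V] (G : SimpleGraph V) (x y : V) (hxy : G.Adj x y)
    (H₁ H₂ : G.Subgraph) (hunion : H₁ ⊔ H₂ = ⊤)
    (hverts : H₁.verts ∩ H₂.verts = {x, y})
    (hedges : H₁.edgeSet ∩ H₂.edgeSet = {s(x, y)}) :
    cEven G = cEven H₁.spanningCoe + cEven H₂.spanningCoe +
      cOddE H₁.spanningCoe x y * cOddE H₂.spanningCoe x y +
      cEvenE H₁.spanningCoe x y * cEvenE H₂.spanningCoe x y :=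
  cEven_glue_general G x y H₁ H₂ hunion hverts hedges
end

section
/- For every odd integer k ≥ 3, letting e denote the edge a_0 b_0 of R_k (an edge of a 4-cycle neither of whose ends lies on the k-cycle), one has c_o(R_k, e) = 2^{k−1} and c_e(R_k, e) = 1. -/
open SimpleGraph Filter

/-!
The vertices `a i`, `b i` have degree `2` in `R_k`, so a cycle through `a 0 b 0` contains the path
`v 0, a 0, b 0, v 1`. If it also contains the edge `v 0 v 1`, it contains, and hence is, the
`4`-cycle of the square at `0`: a nonempty `2`-regular subgraph of a connected `2`-regular graph is
the whole graph. Otherwise, count for each `i` how many of the two `v i`–`v (i + 1)` routes of the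
`i`-th square (the edge and the detour through `a i`, `b i`) the cycle uses. The degree condition
at `v i` says that consecutive counts add up to `2`, and the count `1` at `i = 0` propagates around
the `k`-cycle. So the cycle takes exactly one route in each square and is determined by the set
`S ∋ 0` of detours; conversely each such `S` gives a cycle, with `k + 2 |S|` vertices, an odd number.
-/

theorem Set.ncard_eq_sum_ite_mem_of_subset {α : Type*} {s : Set α} {t : Finset α}
    [DecidablePred (· ∈ s)] (h : s ⊆ t) : s.ncard = ∑ x ∈ t, if x ∈ s then 1 else 0 := by
  rw [← Finset.card_filter, ← Set.ncard_coe_finset]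
  congr
  ext x
  simpa using fun hx => h hx

theorem Finset.ncard_setOf_mem {α : Type*} [Fintype α] [DecidableEq α] (x : α) :
    {s : Finset α | x ∈ s}.ncard = 2 ^ (Fintype.card α - 1) := by
  have : {s : Finset α | x ∈ s} = ↑(Finset.Icc {x} Finset.univ) := by ext; simp
  rw [this, Set.ncard_coe_finset, Finset.card_Icc_finset (Finset.subset_univ _),
    Finset.card_univ, Finset.card_singleton]

theorem ZMod.natCast_ne_zero_of_pos_of_lt {k n : ℕ} (h0 : 0 < n) (hn : n < k) :
    (n : ZMod k) ≠ 0 := by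
  rw [Ne, ZMod.natCast_eq_zero_iff]
  exact Nat.not_dvd_of_pos_of_lt h0 hn

namespace SimpleGraph

variable {V : Type*} {G : SimpleGraph V}

theorem Subgraph.eq_of_le_of_ncard_neighborSet_eq {K H : G.Subgraph} {n : ℕ} (hn : n ≠ 0)
    (hle : K ≤ H) (hK : K.verts.Nonempty) (hKdeg : ∀ x ∈ K.verts, (K.neighborSet x).ncard = n)
    (hH : H.coe.Connected) (hHdeg : ∀ x ∈ H.verts, (H.neighborSet x).ncard = n) : K = H := by
  have hnbr : ∀ x ∈ K.verts, K.neighborSet x = H.neighborSet x := fun x hx =>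
    Set.eq_of_subset_of_ncard_le (fun _ hy => hle.2 hy)
      (by rw [hKdeg x hx, hHdeg x (hle.1 hx)])
      (Set.finite_of_ncard_ne_zero (by rwa [hHdeg x (hle.1 hx)]))
  have hclosed : ∀ x y : H.verts, H.coe.Adj x y → x.1 ∈ K.verts → y.1 ∈ K.verts :=
    fun x y hxy hx => (show y.1 ∈ K.neighborSet x from hnbr x hx ▸ hxy).snd_mem
  have hwalk : ∀ x y : H.verts, H.coe.Walk x y → x.1 ∈ K.verts → y.1 ∈ K.verts := by
    intro x y w
    induction w with
    | nil => exact id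
    | cons hxy _ ih => exact fun hx => ih (hclosed _ _ hxy hx)
  have hverts : H.verts ⊆ K.verts := by
    obtain ⟨x₀, hx₀⟩ := hK
    intro y hy
    obtain ⟨w⟩ := hH.preconnected ⟨x₀, hle.1 hx₀⟩ ⟨y, hy⟩
    exact hwalk _ _ w hx₀
  refine le_antisymm hle ⟨hverts, fun x y hxy => ?_⟩
  exact show y ∈ K.neighborSet x from (hnbr x (hverts hxy.fst_mem)).symm ▸ hxy

theorem Subgraph.IsCycleSub.eq_of_le_s7 {K H : G.Subgraph} (hK : K.IsCycleSub) (hH : H.IsCycleSub)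
    (hle : K ≤ H) : K = H :=
  eq_of_le_of_ncard_neighborSet_eq two_ne_zero hle hK.1 hK.2.2 hH.2.1 hH.2.2

theorem Subgraph.coe_connected_of_forall_exists_iterate {H : G.Subgraph} (f : V → V)
    (hf : ∀ x ∈ H.verts, H.Adj x (f x)) {x₀ : V} (hx₀ : x₀ ∈ H.verts)
    (hcover : ∀ y ∈ H.verts, ∃ n, f^[n] x₀ = y) : H.coe.Connected := by
  have hreach : ∀ n, ∃ h : f^[n] x₀ ∈ H.verts, H.coe.Reachable ⟨x₀, hx₀⟩ ⟨f^[n] x₀, h⟩ := by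
    intro n
    induction n with
    | zero => exact ⟨hx₀, .rfl⟩
    | succ n ih =>
      obtain ⟨hn, hr⟩ := ih
      have hadj := hf _ hn
      rw [Function.iterate_succ_apply']
      exact ⟨hadj.snd_mem, hr.trans hadj.coe.reachable⟩
  rw [connected_iff_exists_forall_reachable]
  refine ⟨⟨x₀, hx₀⟩, fun ⟨y, hy⟩ => ?_⟩
  obtain ⟨n, rfl⟩ := hcover y hy
  exact (hreach n).2

theorem Walk.IsCycle.isCycleSub_toSubgraph_s7 {u : V} {p : G.Walk u u} (hp : p.IsCycle) :
    p.toSubgraph.IsCycleSub :=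
  ⟨⟨u, p.start_mem_verts_toSubgraph⟩, p.toSubgraph_connected.coe,
    fun _ hx => hp.ncard_neighborSet_toSubgraph_eq_two (p.mem_verts_toSubgraph.1 hx)⟩

end SimpleGraph

namespace RGraph

variable {k : ℕ}

def v (i : ZMod k) : ZMod k × Fin 3 := (i, 0)
def a (i : ZMod k) : ZMod k × Fin 3 := (i, 1)
def b (i : ZMod k) : ZMod k × Fin 3 := (i, 2)

@[elab_as_elim]
theorem vertex_cases {motive : ZMod k × Fin 3 → Prop} (p : ZMod k × Fin 3)
    (v : ∀ i, motive (v i)) (a : ∀ i, motive (a i)) (b : ∀ i, motive (b i)) : motive p := by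
  obtain ⟨i, c⟩ := p
  fin_cases c
  exacts [v i, a i, b i]

@[simp] theorem v_inj {i j : ZMod k} : v i = v j ↔ i = j := by simp [v]
@[simp] theorem v_ne_a {i j : ZMod k} : v i ≠ a j := by simp [v, a]
@[simp] theorem v_ne_b {i j : ZMod k} : v i ≠ b j := by simp [v, b]
@[simp] theorem a_ne_b {i j : ZMod k} : a i ≠ b j := by simp [a, b]
@[simp] theorem a_ne_v {i j : ZMod k} : a i ≠ v j := v_ne_a.symm
@[simp] theorem b_ne_v {i j : ZMod k} : b i ≠ v j := v_ne_b.symm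
@[simp] theorem b_ne_a {i j : ZMod k} : b i ≠ a j := a_ne_b.symm

theorem neighborSet_v_subset (i : ZMod k) :
    (RGraph k).neighborSet (v i) ⊆ {v (i + 1), v (i - 1), a i, b (i - 1)} := by
  intro q hq
  induction q using vertex_cases <;>
    simp_all [RGraph, v, a, b, eq_sub_iff_add_eq, eq_comm]

theorem neighborSet_a_subset (i : ZMod k) : (RGraph k).neighborSet (a i) ⊆ {v i, b i} := by
  intro q hq
  induction q using vertex_cases <;> simp_all [RGraph, v, a, b, eq_comm]

theorem neighborSet_b_subset (i : ZMod k) : (RGraph k).neighborSet (b i) ⊆ {a i, v (i + 1)} := by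
  intro q hq
  induction q using vertex_cases <;> simp_all [RGraph, v, a, b, eq_comm]

theorem adj_v_a (i : ZMod k) : (RGraph k).Adj (v i) (a i) := by simp [RGraph, v, a]

theorem adj_a_b (i : ZMod k) : (RGraph k).Adj (a i) (b i) := by simp [RGraph, a, b]

theorem adj_b_v (i : ZMod k) : (RGraph k).Adj (b i) (v (i + 1)) := by simp [RGraph, v, b]

section

variable [Fact (2 < k)]

-- Provides `NeZero k` and `Nontrivial (ZMod k)`, so that `simp` knows `(1 : ZMod k) ≠ 0`.
instance : Fact (1 < k) := ⟨(Fact.out : 2 < k).trans' one_lt_two⟩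

theorem add_one_ne_sub_one (i : ZMod k) : i + 1 ≠ i - 1 := by
  rw [Ne, ← sub_eq_zero, add_sub_sub_cancel, one_add_one_eq_two]
  exact_mod_cast ZMod.natCast_ne_zero_of_pos_of_lt two_pos (Fact.out (p := 2 < k))

theorem adj_v_succ (i : ZMod k) : (RGraph k).Adj (v i) (v (i + 1)) := by
  simp [RGraph, v]

end

section Degrees

variable (H : (RGraph k).Subgraph) (i : ZMod k)

open scoped Classical in
theorem ncard_neighborSet_a : (H.neighborSet (a i)).ncard =
    (if H.Adj (a i) (v i) then 1 else 0) + (if H.Adj (a i) (b i) then 1 else 0) := by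
  rw [Set.ncard_eq_sum_ite_mem_of_subset (t := {v i, b i})
    (fun q hq => by simpa using neighborSet_a_subset i (H.adj_sub hq)), Finset.sum_pair v_ne_b]
  rfl

open scoped Classical in
theorem ncard_neighborSet_b : (H.neighborSet (b i)).ncard =
    (if H.Adj (b i) (a i) then 1 else 0) + (if H.Adj (b i) (v (i + 1)) then 1 else 0) := by
  rw [Set.ncard_eq_sum_ite_mem_of_subset (t := {a i, v (i + 1)})
    (fun q hq => by simpa using neighborSet_b_subset i (H.adj_sub hq)), Finset.sum_pair a_ne_v]
  rfl

open scoped Classical in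
theorem ncard_neighborSet_v [Fact (2 < k)] : (H.neighborSet (v i)).ncard =
    (if H.Adj (v i) (v (i + 1)) then 1 else 0) + (if H.Adj (v i) (v (i - 1)) then 1 else 0) +
      (if H.Adj (v i) (a i) then 1 else 0) + (if H.Adj (v i) (b (i - 1)) then 1 else 0) := by
  rw [Set.ncard_eq_sum_ite_mem_of_subset (t := {v (i + 1), v (i - 1), a i, b (i - 1)})
    (fun q hq => by simpa using neighborSet_v_subset i (H.adj_sub hq)),
    Finset.sum_insert (by simp [add_one_ne_sub_one]), Finset.sum_insert (by simp),
    Finset.sum_pair a_ne_b, ← add_assoc, ← add_assoc]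
  rfl

open scoped Classical in
/-- How many of the two `v i`–`v (i + 1)` routes of the `i`-th square of `R_k` (the edge itself,
and the detour through `a i`, `b i`) the subgraph `H` uses. -/
noncomputable def routes : ℕ :=
  (if H.Adj (v i) (v (i + 1)) then 1 else 0) + (if a i ∈ H.verts then 1 else 0)

end Degrees

section Regular

variable {H : (RGraph k).Subgraph} {i : ZMod k}
  (hH : ∀ p ∈ H.verts, (H.neighborSet p).ncard = 2)
include hH

theorem adj_of_a_mem (ha : a i ∈ H.verts) : H.Adj (a i) (v i) ∧ H.Adj (a i) (b i) := by
  have h := ncard_neighborSet_a H i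
  rw [hH _ ha] at h
  split_ifs at h with h₁ h₂ <;> first | exact ⟨h₁, h₂⟩ | omega

theorem adj_of_b_mem (hb : b i ∈ H.verts) : H.Adj (b i) (a i) ∧ H.Adj (b i) (v (i + 1)) := by
  have h := ncard_neighborSet_b H i
  rw [hH _ hb] at h
  split_ifs at h with h₁ h₂ <;> first | exact ⟨h₁, h₂⟩ | omega

theorem b_mem_iff_a_mem : b i ∈ H.verts ↔ a i ∈ H.verts :=
  ⟨fun hb => (adj_of_b_mem hH hb).1.snd_mem, fun ha => (adj_of_a_mem hH ha).2.snd_mem⟩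

theorem routes_sub_one_add_routes [Fact (2 < k)] (hv : v i ∈ H.verts) :
    routes H (i - 1) + routes H i = 2 := by
  classical
  have h := ncard_neighborSet_v H i
  have hva : H.Adj (v i) (a i) ↔ a i ∈ H.verts :=
    ⟨fun h => h.snd_mem, fun ha => (adj_of_a_mem hH ha).1.symm⟩
  have hvb : H.Adj (v i) (b (i - 1)) ↔ a (i - 1) ∈ H.verts := by
    refine ⟨fun h => (b_mem_iff_a_mem hH).1 h.snd_mem, fun ha => ?_⟩
    have := (adj_of_b_mem hH ((b_mem_iff_a_mem hH).2 ha)).2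
    rwa [sub_add_cancel, H.adj_comm] at this
  have hvv : H.Adj (v i) (v (i - 1)) ↔ H.Adj (v (i - 1)) (v (i - 1 + 1)) := by
    rw [sub_add_cancel, H.adj_comm]
  simp only [hH _ hv, hva, hvb, hvv] at h
  unfold routes
  omega

theorem v_add_one_mem_of_routes_pos (h : 0 < routes H i) : v (i + 1) ∈ H.verts := by
  classical
  unfold routes at h
  by_cases hvv : H.Adj (v i) (v (i + 1))
  · exact hvv.snd_mem
  · have ha : a i ∈ H.verts := by by_contra ha; simp [hvv, ha] at h
    exact (adj_of_b_mem hH ((b_mem_iff_a_mem hH).2 ha)).2.snd_mem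

end Regular

section Square

variable [Fact (2 < k)]

def squareWalk : (RGraph k).Walk (v 0) (v 0) :=
  .cons (adj_v_a 0) <| .cons (adj_a_b 0) <| .cons (zero_add (1 : ZMod k) ▸ adj_b_v 0) <|
    .cons (zero_add (1 : ZMod k) ▸ adj_v_succ 0).symm .nil

theorem squareWalk_isCycle : (squareWalk : (RGraph k).Walk (v 0) (v 0)).IsCycle := by
  simp [squareWalk, Walk.cons_isCycle_iff, Walk.cons_isPath_iff]

def square : (RGraph k).Subgraph := squareWalk.toSubgraph

theorem square_isCycleSub : (square : (RGraph k).Subgraph).IsCycleSub :=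
  squareWalk_isCycle.isCycleSub_toSubgraph_s7

theorem square_le {H : (RGraph k).Subgraph} (hab : H.Adj (a 0) (b 0)) (hvv : H.Adj (v 0) (v 1))
    (hva : H.Adj (v 0) (a 0)) (hbv : H.Adj (b 0) (v 1)) : square ≤ H := by
  simp [square, squareWalk, Walk.toSubgraph, hvv.symm, *]

theorem square_adj_a_b : (square : (RGraph k).Subgraph).Adj (a 0) (b 0) := by
  simp [square, squareWalk, Walk.toSubgraph]

theorem square_verts_ncard : (square : (RGraph k).Subgraph).verts.ncard = 4 := by
  simp [square, squareWalk, Set.ncard_insert_of_notMem]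

end Square

section DetourCycle

/-- The successor function of `detourCycle S`, which follows the `k`-cycle but replaces the edge
`v i v (i + 1)` by the detour `v i, a i, b i, v (i + 1)` for `i ∈ S`. -/
def next (S : Finset (ZMod k)) (p : ZMod k × Fin 3) : ZMod k × Fin 3 :=
  match p with
  | (i, 0) => if i ∈ S then a i else v (i + 1)
  | (i, 1) => b i
  | (i, 2) => v (i + 1)

def detourVerts (S : Finset (ZMod k)) : Set (ZMod k × Fin 3) := {p | p.2 = 0 ∨ p.1 ∈ S}

variable (S : Finset (ZMod k)) (i : ZMod k)

@[simp] theorem next_v : next S (v i) = if i ∈ S then a i else v (i + 1) := rfl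
@[simp] theorem next_a : next S (a i) = b i := rfl
@[simp] theorem next_b : next S (b i) = v (i + 1) := rfl

@[simp] theorem v_mem_detourVerts : v i ∈ detourVerts S := Or.inl rfl
@[simp] theorem a_mem_detourVerts : a i ∈ detourVerts S ↔ i ∈ S := by simp [detourVerts, a]
@[simp] theorem b_mem_detourVerts : b i ∈ detourVerts S ↔ i ∈ S := by simp [detourVerts, b]

theorem next_mem_detourVerts {p : ZMod k × Fin 3} (hp : p ∈ detourVerts S) :
    next S p ∈ detourVerts S := by
  induction p using vertex_cases <;> simp_all [apply_ite (· ∈ detourVerts S)]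

theorem exists_iterate_next_eq_v (n : ℕ) : ∃ m, (next S)^[m] (v 0) = v n := by
  induction n with
  | zero => exact ⟨0, by simp⟩
  | succ n ih =>
    obtain ⟨m, hm⟩ := ih
    by_cases hn : (n : ZMod k) ∈ S
    · exact ⟨m + 3, by simp [Function.iterate_succ_apply', hm, hn]⟩
    · exact ⟨m + 1, by simp [Function.iterate_succ_apply', hm, hn]⟩

theorem adj_next [Fact (2 < k)] (p : ZMod k × Fin 3) : (RGraph k).Adj p (next S p) := by
  induction p using vertex_cases with
  | v i => by_cases hi : i ∈ S <;> simp [hi, adj_v_a, adj_v_succ]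
  | a i => exact adj_a_b i
  | b i => exact adj_b_v i

end DetourCycle

def detourCycle [Fact (2 < k)] (S : Finset (ZMod k)) : (RGraph k).Subgraph where
  verts := detourVerts S
  Adj p q := (p ∈ detourVerts S ∧ q = next S p) ∨ (q ∈ detourVerts S ∧ p = next S q)
  adj_sub := by
    rintro p q (⟨-, rfl⟩ | ⟨-, rfl⟩)
    exacts [adj_next S p, (adj_next S q).symm]
  edge_vert := by
    rintro p q (⟨hp, -⟩ | ⟨hq, rfl⟩)
    exacts [hp, next_mem_detourVerts S hq]
  symm := ⟨fun _ _ => Or.symm⟩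

section DetourCycle

variable [Fact (2 < k)] (S : Finset (ZMod k))

@[simp] theorem detourCycle_verts : (detourCycle S).verts = detourVerts S := rfl

theorem detourCycle_adj {p q : ZMod k × Fin 3} : (detourCycle S).Adj p q ↔
    (p ∈ detourVerts S ∧ q = next S p) ∨ (q ∈ detourVerts S ∧ p = next S q) := Iff.rfl

theorem detourCycle_ncard_neighborSet {p : ZMod k × Fin 3} (hp : p ∈ detourVerts S) :
    ((detourCycle S).neighborSet p).ncard = 2 := by
  induction p using vertex_cases with
  | v i =>
    have h₁ : i - 1 ≠ i + 1 := (add_one_ne_sub_one i).symm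
    have h₂ : i ≠ i + 1 + 1 := fun h => add_one_ne_sub_one i (by linear_combination -h)
    rw [ncard_neighborSet_v]
    by_cases hi : i ∈ S <;> by_cases hi' : i - 1 ∈ S <;>
      simp [detourCycle_adj, hi, hi', h₁, h₂, eq_ite_iff]
  | a i =>
    rw [ncard_neighborSet_a]
    simp_all [detourCycle_adj]
  | b i =>
    rw [ncard_neighborSet_b]
    simp_all [detourCycle_adj]

theorem detourCycle_isCycleSub : (detourCycle S).IsCycleSub := by
  refine ⟨⟨v 0, v_mem_detourVerts S 0⟩, ?_, fun p hp => detourCycle_ncard_neighborSet S hp⟩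
  refine Subgraph.coe_connected_of_forall_exists_iterate (next S) (fun p hp => .inl ⟨hp, rfl⟩)
    (v_mem_detourVerts S 0) fun p hp => ?_
  induction p using vertex_cases with
  | v i => simpa using exists_iterate_next_eq_v S i.val
  | a i =>
    obtain ⟨m, hm⟩ := exists_iterate_next_eq_v S i.val
    exact ⟨m + 1, by simp_all [Function.iterate_succ_apply']⟩
  | b i =>
    obtain ⟨m, hm⟩ := exists_iterate_next_eq_v S i.val
    exact ⟨m + 2, by simp_all [Function.iterate_succ_apply']⟩

theorem detourVerts_ncard : (detourVerts S).ncard = k + 2 * S.card := by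
  classical
  have : detourVerts S = ↑(Finset.univ.filter fun p : ZMod k × Fin 3 => p.2 = 0 ∨ p.1 ∈ S) := by
    ext; simp [detourVerts]
  rw [this, Set.ncard_coe_finset, Finset.card_filter, Fintype.sum_prod_type_right,
    Fin.sum_univ_three]
  simp [two_mul, add_assoc]

theorem odd_detourCycle_verts_ncard (hk : Odd k) : Odd (detourCycle S).verts.ncard := by
  simpa [detourVerts_ncard] using hk.add_even (even_two_mul _)

theorem detourCycle_adj_a_b (h0 : 0 ∈ S) : (detourCycle S).Adj (a 0) (b 0) :=
  .inl ⟨by simpa using h0, rfl⟩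

theorem detourCycle_injective : Function.Injective (detourCycle (k := k)) := by
  intro S T h
  ext i
  simpa using congrArg (a i ∈ ·.verts) h

end DetourCycle

section Classification

variable [Fact (2 < k)] {H : (RGraph k).Subgraph}

theorem v_mem_and_routes_eq_one (hH : ∀ p ∈ H.verts, (H.neighborSet p).ncard = 2)
    (ha : a 0 ∈ H.verts) (hvv : ¬ H.Adj (v 0) (v 1)) (n : ℕ) :
    v (n : ZMod k) ∈ H.verts ∧ routes H n = 1 := by
  induction n with
  | zero => simpa [routes, hvv, ha] using (adj_of_a_mem hH ha).1.snd_mem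
  | succ n ih =>
    have hv := v_add_one_mem_of_routes_pos hH (ih.2 ▸ one_pos)
    have h := routes_sub_one_add_routes hH hv
    rw [add_sub_cancel_right, ih.2] at h
    push_cast
    exact ⟨hv, by omega⟩

open scoped Classical in
theorem detourCycle_le (hH : ∀ p ∈ H.verts, (H.neighborSet p).ncard = 2)
    (hroutes : ∀ i, routes H i = 1) : detourCycle (Finset.univ.filter (a · ∈ H.verts)) ≤ H := by
  have hnext : ∀ p ∈ detourVerts (Finset.univ.filter (a · ∈ H.verts)),
      H.Adj p (next (Finset.univ.filter (a · ∈ H.verts)) p) := by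
    intro p hp
    induction p using vertex_cases with
    | v i =>
      by_cases ha : a i ∈ H.verts
      · simpa [ha] using (adj_of_a_mem hH ha).1.symm
      · simpa [routes, ha] using hroutes i
    | a i => simpa using (adj_of_a_mem hH (by simpa using hp)).2
    | b i => simpa using (adj_of_b_mem hH ((b_mem_iff_a_mem hH).2 (by simpa using hp))).2
  refine ⟨fun p hp => (hnext p hp).fst_mem, ?_⟩
  rintro p q (⟨hp, rfl⟩ | ⟨hq, rfl⟩)
  exacts [hnext p hp, (hnext q hq).symm]

theorem eq_square_or_eq_detourCycle (hcyc : H.IsCycleSub) (hab : H.Adj (a 0) (b 0)) :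
    H = square ∨ ∃ S, 0 ∈ S ∧ H = detourCycle S := by
  classical
  have hH := hcyc.2.2
  by_cases hvv : H.Adj (v 0) (v 1)
  · have hbv : H.Adj (b 0) (v 1) := by simpa using (adj_of_b_mem hH hab.snd_mem).2
    exact .inl (square_isCycleSub.eq_of_le_s7 hcyc
      (square_le hab hvv (adj_of_a_mem hH hab.fst_mem).1.symm hbv)).symm
  · have hroutes (i : ZMod k) : routes H i = 1 := by
      simpa using (v_mem_and_routes_eq_one hH hab.fst_mem hvv i.val).2
    exact .inr ⟨_, by simpa using hab.fst_mem,
      ((detourCycle_isCycleSub _).eq_of_le_s7 hcyc (detourCycle_le hH hroutes)).symm⟩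

theorem setOf_isCycleSub_odd_adj_a_b (hk : Odd k) :
    {H : (RGraph k).Subgraph | H.IsCycleSub ∧ Odd H.verts.ncard ∧ H.Adj (a 0) (b 0)} =
      detourCycle '' {S | 0 ∈ S} := by
  ext H
  constructor
  · rintro ⟨hcyc, hodd, hab⟩
    obtain rfl | ⟨S, h0, rfl⟩ := eq_square_or_eq_detourCycle hcyc hab
    · rw [square_verts_ncard] at hodd
      exact absurd hodd (by decide)
    · exact ⟨S, h0, rfl⟩
  · rintro ⟨S, h0, rfl⟩
    exact ⟨detourCycle_isCycleSub S, odd_detourCycle_verts_ncard S hk, detourCycle_adj_a_b S h0⟩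

theorem setOf_isCycleSub_even_adj_a_b (hk : Odd k) :
    {H : (RGraph k).Subgraph | H.IsCycleSub ∧ Even H.verts.ncard ∧ H.Adj (a 0) (b 0)} =
      {square} := by
  ext H
  constructor
  · rintro ⟨hcyc, heven, hab⟩
    obtain rfl | ⟨S, -, rfl⟩ := eq_square_or_eq_detourCycle hcyc hab
    · rfl
    · exact absurd heven (Nat.not_even_iff_odd.2 (odd_detourCycle_verts_ncard S hk))
  · rintro rfl
    exact ⟨square_isCycleSub, by rw [square_verts_ncard]; decide, square_adj_a_b⟩

end Classification

end RGraph

theorem cOddE_cEvenE_RGraph (k : ℕ) (hk : 3 ≤ k) (hkodd : Odd k) :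
    cOddE (RGraph k) ((0 : ZMod k), (1 : Fin 3)) ((0 : ZMod k), (2 : Fin 3)) = 2 ^ (k - 1) ∧
      cEvenE (RGraph k) ((0 : ZMod k), (1 : Fin 3)) ((0 : ZMod k), (2 : Fin 3)) = 1 := by
  have : Fact (2 < k) := ⟨hk⟩
  constructor
  · rw [cOddE, ← RGraph.a, ← RGraph.b, RGraph.setOf_isCycleSub_odd_adj_a_b hkodd,
      Set.ncard_image_of_injective _ RGraph.detourCycle_injective, Finset.ncard_setOf_mem,
      ZMod.card]
  · rw [cEvenE, ← RGraph.a, ← RGraph.b, RGraph.setOf_isCycleSub_even_adj_a_b hkodd,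
      Set.ncard_singleton]
end
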